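/- arXiv:1910.12821 — 5 statements merged into one kernel-verified Lean document; each statement's English description precedes it below -/
import Mathlib

section
/- Let α ∈ (1,2) and θ ∈ ℝ with |θ| ≤ π/α − π/2, and define G⁺ as in the context. Then G⁺ is bounded on ℝ \ {0}, G⁺ is integrable on ℝ, and both functions x ↦ G⁺(x) and x ↦ G⁺(−x) are completely monotone on (0,∞) (i.e. smooth with (−1)^n · (d/dx)^n of the function nonnegative for all n ≥ 0 and x > 0). -/
open MeasureTheory Filter

noncomputable section
set_option linter.unusedSectionVars false
set_option maxHeartbeats 1000000

/-- The function `G⁺` from the paper, defined by exponential-integral formulas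
for `x > 0` and `x < 0` (the value at `0` is taken by the second branch). -/
def Gplus (α θ x : ℝ) : ℝ :=
  if 0 < x then
    α * Real.sin (Real.pi / α) / Real.pi *
      ∫ t in Set.Ioi (0 : ℝ),
        t ^ α * Real.sin (α * (Real.pi / 2 - θ)) /
            (t ^ (2 * α) - 2 * t ^ α * Real.cos (α * (Real.pi / 2 - θ)) + 1) *
          Real.exp (-(t * x))
  else
    α * Real.sin (Real.pi / α) / Real.pi *
      ∫ t in Set.Ioi (0 : ℝ),
        t ^ α * Real.sin (α * (Real.pi / 2 + θ)) /
            (t ^ (2 * α) - 2 * t ^ α * Real.cos (α * (Real.pi / 2 + θ)) + 1) *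
          Real.exp (t * x)

/-- The characteristic exponent `ψ`, extended holomorphically off the imaginary axis. -/
def psi (α θ : ℝ) (ξ : ℂ) : ℂ :=
  if 0 < ξ.re then (Complex.exp (-(θ : ℂ) * Complex.I) * ξ) ^ (α : ℂ)
  else (Complex.exp ((θ : ℂ) * Complex.I) * (-ξ)) ^ (α : ℂ)

/-- The class `𝓗₊` of test functions. -/
def Hplus (g : ℝ → ℝ) : Prop :=
  (∀ x : ℝ, x < 0 → g x = 0) ∧
  ∃ G : ℂ → ℂ,
    DifferentiableOn ℂ G {z : ℂ | 0 < z.re} ∧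
    (∀ x : ℝ, 0 < x → G (x : ℂ) = (g x : ℂ)) ∧
    (∀ ε : ℝ, 0 < ε → ε < Real.pi / 2 →
      ∃ δ : ℝ, 0 < δ ∧ ∃ C : ℝ, 0 < C ∧ ∃ R : ℝ, 0 < R ∧
        ∀ z : ℂ, 0 < z.re → |z.arg| ≤ Real.pi / 2 - ε →
          (R ≤ ‖z‖ → ‖G z‖ ≤ C * ‖z‖ ^ (-(δ * ‖z‖))) ∧ (‖z‖ ≤ R → ‖G z‖ ≤ C))

/-- The class `𝓗₋` of test functions. -/
def Hminus (g : ℝ → ℝ) : Prop := Hplus (fun x => g (-x))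

/-- The class `𝓗 = 𝓗₊ + 𝓗₋` of test functions. -/
def Hclass (g : ℝ → ℝ) : Prop :=
  ∃ gp gm : ℝ → ℝ, Hplus gp ∧ Hminus gm ∧ ∀ x : ℝ, g x = gp x + gm x

/-- Two-sided Laplace transform. -/
def Ltrans (g : ℝ → ℝ) (z : ℂ) : ℂ := ∫ x : ℝ, (g x : ℂ) * Complex.exp (-z * x)

namespace CM

/-- The kernel appearing in the definition of `G⁺`. -/
def ker (α β t : ℝ) : ℝ :=
  t ^ α * Real.sin β / (t ^ (2 * α) - 2 * t ^ α * Real.cos β + 1)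

/-- The kernel multiplied by a nonnegative constant. -/
def kc (c α β : ℝ) (t : ℝ) : ℝ := c * ker α β t

/-- The basic Laplace-type integral (real). -/
def J (k : ℝ → ℝ) (n : ℕ) (x : ℝ) : ℝ :=
  ∫ t in Set.Ioi (0:ℝ), k t * t ^ n * Real.exp (-(t * x))

/-- The basic Laplace-type integral (complex). -/
def Jc (k : ℝ → ℝ) (n : ℕ) (z : ℂ) : ℂ :=
  ∫ t in Set.Ioi (0:ℝ), (k t : ℂ) * (t : ℂ) ^ n * Complex.exp (-((t : ℂ) * z))

lemma integrableOn_pow_exp {x : ℝ} (hx : 0 < x) (n : ℕ) :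
    IntegrableOn (fun t : ℝ => t ^ n * Real.exp (-(t * x))) (Set.Ioi 0) := by
  have h := integrableOn_rpow_mul_exp_neg_mul_rpow (p := 1) (s := (n : ℝ)) (b := x)
    (lt_of_lt_of_le neg_one_lt_zero (Nat.cast_nonneg n)) zero_lt_one hx
  refine h.congr_fun (fun t ht => ?_) measurableSet_Ioi
  beta_reduce
  rw [Real.rpow_one, Real.rpow_natCast]
  ring_nf

section

variable {k : ℝ → ℝ} {K : ℝ}
  (hk : AEStronglyMeasurable k (volume.restrict (Set.Ioi 0)))
  (hk0 : ∀ t ∈ Set.Ioi (0:ℝ), 0 ≤ k t)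
  (hkK : ∀ t ∈ Set.Ioi (0:ℝ), k t ≤ K)

include hk hk0 hkK

lemma aesm_Fc (n : ℕ) (z : ℂ) :
    AEStronglyMeasurable (fun t : ℝ => (k t : ℂ) * (t : ℂ) ^ n * Complex.exp (-((t : ℂ) * z)))
      (volume.restrict (Set.Ioi 0)) :=
  ((Complex.continuous_ofReal.comp_aestronglyMeasurable hk).mul
      ((Complex.continuous_ofReal.pow n).aestronglyMeasurable)).mul
    ((Complex.continuous_exp.comp
      ((Complex.continuous_ofReal.mul continuous_const).neg)).aestronglyMeasurable)

lemma aesm_Fc' (n : ℕ) (z : ℂ) :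
    AEStronglyMeasurable
      (fun t : ℝ => (k t : ℂ) * (t : ℂ) ^ n * (-(t : ℂ) * Complex.exp (-((t : ℂ) * z))))
      (volume.restrict (Set.Ioi 0)) :=
  ((Complex.continuous_ofReal.comp_aestronglyMeasurable hk).mul
      ((Complex.continuous_ofReal.pow n).aestronglyMeasurable)).mul
    ((Complex.continuous_ofReal.neg.mul (Complex.continuous_exp.comp
      ((Complex.continuous_ofReal.mul continuous_const).neg))).aestronglyMeasurable)

lemma integrableOn_Fc (n : ℕ) {z : ℂ} (hz : 0 < z.re) :
    IntegrableOn (fun t : ℝ => (k t : ℂ) * (t : ℂ) ^ n * Complex.exp (-((t : ℂ) * z)))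
      (Set.Ioi 0) := by
  refine Integrable.mono' ((integrableOn_pow_exp hz n).const_mul K) (aesm_Fc hk hk0 hkK n z) ?_
  filter_upwards [ae_restrict_mem measurableSet_Ioi] with t ht
  have ht' : (0:ℝ) < t := ht
  have hre : (-((t : ℂ) * z)).re = -(t * z.re) := by simp
  rw [norm_mul, norm_mul, Complex.norm_real, norm_pow, Complex.norm_real,
    Complex.norm_exp, hre, Real.norm_eq_abs, Real.norm_eq_abs,
    abs_of_nonneg (hk0 t ht), abs_of_pos ht', mul_assoc]
  exact mul_le_mul_of_nonneg_right (hkK t ht) (by positivity)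

lemma hasDerivAt_Jc (n : ℕ) {z₀ : ℂ} (hz : 0 < z₀.re) :
    HasDerivAt (Jc k n) (-(Jc k (n + 1) z₀)) z₀ := by
  have hε : 0 < z₀.re / 2 := by linarith
  have hball : ∀ z ∈ Metric.ball z₀ (z₀.re / 2), z₀.re / 2 ≤ z.re := by
    intro z hz'
    rw [Metric.mem_ball, Complex.dist_eq] at hz'
    have h1 : |(z - z₀).re| ≤ ‖z - z₀‖ := Complex.abs_re_le_norm _
    rw [Complex.sub_re] at h1
    have h2 := abs_le.1 (h1.trans hz'.le)
    linarith [h2.1]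
  have key := hasDerivAt_integral_of_dominated_loc_of_deriv_le
      (μ := volume.restrict (Set.Ioi 0))
      (F := fun (z : ℂ) (t : ℝ) => (k t : ℂ) * (t : ℂ) ^ n * Complex.exp (-((t : ℂ) * z)))
      (F' := fun (z : ℂ) (t : ℝ) =>
        (k t : ℂ) * (t : ℂ) ^ n * (-(t : ℂ) * Complex.exp (-((t : ℂ) * z))))
      (x₀ := z₀) (s := Metric.ball z₀ (z₀.re / 2))
      (bound := fun t => K * (t ^ (n + 1) * Real.exp (-(t * (z₀.re / 2))))) (Metric.ball_mem_nhds z₀ hε)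
      (Filter.Eventually.of_forall fun z => aesm_Fc hk hk0 hkK n z)
      (integrableOn_Fc hk hk0 hkK n hz)
      (aesm_Fc' hk hk0 hkK n z₀)
      ?_ ((integrableOn_pow_exp hε (n + 1)).const_mul K) ?_
  · have heq : (∫ t in Set.Ioi (0:ℝ),
        (k t : ℂ) * (t : ℂ) ^ n * (-(t : ℂ) * Complex.exp (-((t : ℂ) * z₀))))
        = -(Jc k (n + 1) z₀) := by
      rw [Jc, ← integral_neg]
      refine setIntegral_congr_fun measurableSet_Ioi fun t ht => ?_
      push_cast
      ring
    rw [← heq]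
    exact key.2
  · filter_upwards [ae_restrict_mem measurableSet_Ioi] with t ht
    intro z hz'
    have ht' : (0:ℝ) < t := ht
    have hre : (-((t : ℂ) * z)).re = -(t * z.re) := by simp
    have h2 : Real.exp (-(t * z.re)) ≤ Real.exp (-(t * (z₀.re / 2))) := by
      have := hball z hz'
      apply Real.exp_le_exp.2
      nlinarith
    simp only [norm_mul, norm_neg, norm_pow, Complex.norm_real, Real.norm_eq_abs,
      Complex.norm_exp, hre]
    rw [abs_of_nonneg (hk0 t ht), abs_of_pos ht', pow_succ]
    calc k t * t ^ n * (t * Real.exp (-(t * z.re)))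
        ≤ K * t ^ n * (t * Real.exp (-(t * (z₀.re / 2)))) := by
          have hkt : 0 ≤ k t := hk0 t ht
          have hKt : 0 ≤ K := hkt.trans (hkK t ht)
          gcongr
          exact hkK t ht
      _ = K * (t ^ n * t * Real.exp (-(t * (z₀.re / 2)))) := by ring
  · filter_upwards [ae_restrict_mem measurableSet_Ioi] with t ht
    intro z hz'
    have h1 : HasDerivAt (fun z : ℂ => -((t : ℂ) * z)) (-(t : ℂ)) z := by
      have := (((hasDerivAt_id' z).const_mul (t : ℂ)).neg)
      simp only [mul_one] at this
      exact this
    have h3 := (h1.cexp).const_mul ((k t : ℂ) * (t : ℂ) ^ n)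
    convert h3 using 1
    all_goals first | rfl | ring

omit hk hk0 hkK in
lemma Jc_ofReal (n : ℕ) (x : ℝ) : Jc k n (x : ℂ) = ((J k n x : ℝ) : ℂ) := by
  have hcast : ∫ t in Set.Ioi (0:ℝ), ((k t * t ^ n * Real.exp (-(t * x)) : ℝ) : ℂ)
      = ((∫ t in Set.Ioi (0:ℝ), k t * t ^ n * Real.exp (-(t * x)) : ℝ) : ℂ) :=
    integral_ofReal
  rw [Jc, J, ← hcast]
  refine setIntegral_congr_fun measurableSet_Ioi fun t ht => ?_
  push_cast
  ring

lemma hasDerivAt_J (n : ℕ) {x : ℝ} (hx : 0 < x) :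
    HasDerivAt (J k n) (-(J k (n + 1) x)) x := by
  have h := (hasDerivAt_Jc hk hk0 hkK n (z₀ := (x : ℂ)) (by simpa using hx)).real_of_complex
  have e1 : (fun y : ℝ => (Jc k n (y : ℂ)).re) = J k n := by
    funext y; rw [Jc_ofReal]; simp
  have e2 : (-(Jc k (n + 1) (x : ℂ))).re = -(J k (n + 1) x) := by
    rw [Jc_ofReal]; simp
  rw [e1, e2] at h
  exact h

omit hk hkK in
lemma J_nonneg (n : ℕ) (x : ℝ) : 0 ≤ J k n x :=
  setIntegral_nonneg measurableSet_Ioi fun t ht =>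
    mul_nonneg (mul_nonneg (hk0 t ht) (pow_nonneg (le_of_lt ht) n)) (Real.exp_pos _).le

lemma iteratedDerivWithin_J_eq (n : ℕ) :
    ∀ x ∈ Set.Ioi (0:ℝ), iteratedDerivWithin n (J k 0) (Set.Ioi 0) x = (-1) ^ n * J k n x := by
  induction n with
  | zero => intro x hx; simp
  | succ n ih =>
    intro x hx
    rw [iteratedDerivWithin_succ,
      derivWithin_congr (fun y hy => ih y hy) (ih x hx),
      derivWithin_of_isOpen isOpen_Ioi hx]
    have h : HasDerivAt (fun y => (-1:ℝ) ^ n * J k n y) ((-1) ^ n * -(J k (n + 1) x)) x :=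
      (hasDerivAt_J hk hk0 hkK n hx).const_mul _
    rw [h.deriv]
    ring

lemma analyticOnNhd_J : AnalyticOnNhd ℝ (J k 0) (Set.Ioi 0) := by
  have hopen : IsOpen {z : ℂ | 0 < z.re} := isOpen_lt continuous_const Complex.continuous_re
  have hd : DifferentiableOn ℂ (Jc k 0) {z : ℂ | 0 < z.re} := fun z hz =>
    (hasDerivAt_Jc hk hk0 hkK 0 hz).differentiableAt.differentiableWithinAt
  have ha : AnalyticOnNhd ℝ (Jc k 0) {z : ℂ | 0 < z.re} :=
    (hd.analyticOnNhd hopen).restrictScalars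
  have hcr : AnalyticOnNhd ℝ (fun x : ℝ => (x : ℂ)) (Set.Ioi 0) :=
    Complex.ofRealCLM.analyticOnNhd _
  have hcomp : AnalyticOnNhd ℝ (fun x : ℝ => Jc k 0 ((x : ℝ) : ℂ)) (Set.Ioi 0) :=
    ha.comp hcr fun x hx => by simpa using hx
  have hre : AnalyticOnNhd ℝ (fun x : ℝ => (Jc k 0 ((x : ℝ) : ℂ)).re) (Set.Ioi 0) :=
    (Complex.reCLM.analyticOnNhd Set.univ).comp hcomp (Set.mapsTo_univ _ _)
  exact hre.congr isOpen_Ioi fun x hx => by rw [Jc_ofReal]; simp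

lemma continuousOn_J : ContinuousOn (J k 0) (Set.Ioi 0) := fun x hx =>
  ((hasDerivAt_J hk hk0 hkK 0 hx).continuousAt).continuousWithinAt

end

section

variable {k : ℝ → ℝ}
  (hk : AEStronglyMeasurable k (volume.restrict (Set.Ioi 0)))
  (hk0 : ∀ t ∈ Set.Ioi (0:ℝ), 0 ≤ k t)
  (hki : IntegrableOn k (Set.Ioi 0))

include hk hk0 hki

lemma integrableOn_J0 {x : ℝ} (hx : 0 ≤ x) :
    IntegrableOn (fun t => k t * t ^ 0 * Real.exp (-(t * x))) (Set.Ioi 0) := by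
  simp only [pow_zero, mul_one]
  refine Integrable.mono' hki
    (hk.mul ((Real.continuous_exp.comp
      ((continuous_id.mul continuous_const).neg)).aestronglyMeasurable)) ?_
  filter_upwards [ae_restrict_mem measurableSet_Ioi] with t ht
  have ht' : (0:ℝ) < t := ht
  rw [Real.norm_eq_abs, abs_mul, abs_of_nonneg (hk0 t ht), Real.abs_exp]
  exact mul_le_of_le_one_right (hk0 t ht)
    (Real.exp_le_one_iff.2 (by nlinarith))

lemma J_le_int {x : ℝ} (hx : 0 ≤ x) : J k 0 x ≤ ∫ t in Set.Ioi (0:ℝ), k t := by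
  refine setIntegral_mono_on (integrableOn_J0 hk hk0 hki hx) hki measurableSet_Ioi
    fun t ht => ?_
  have ht' : (0:ℝ) < t := ht
  rw [pow_zero, mul_one]
  exact mul_le_of_le_one_right (hk0 t ht) (Real.exp_le_one_iff.2 (by nlinarith))

lemma J_tail {α A : ℝ} (hα : 0 < α) (hkA : ∀ t ∈ Set.Ioi (0:ℝ), k t ≤ A * t ^ α)
    {x : ℝ} (hx : 0 < x) :
    J k 0 x ≤ (A * Real.Gamma (α + 1)) * (1 / x) ^ (α + 1) := by
  have hmaj : IntegrableOn (fun t : ℝ => A * (t ^ α * Real.exp (-(x * t)))) (Set.Ioi 0) := by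
    apply Integrable.const_mul
    have h := integrableOn_rpow_mul_exp_neg_mul_rpow (s := α) (p := 1) (b := x)
      (by linarith) zero_lt_one hx
    refine h.congr_fun (fun t ht => ?_) measurableSet_Ioi
    beta_reduce
    rw [Real.rpow_one]
    ring_nf
  have h1 : J k 0 x ≤ ∫ t in Set.Ioi (0:ℝ), A * (t ^ α * Real.exp (-(x * t))) := by
    refine setIntegral_mono_on (integrableOn_J0 hk hk0 hki hx.le) hmaj measurableSet_Ioi
      fun t ht => ?_
    rw [pow_zero, mul_one, show -(x * t) = -(t * x) by ring]
    calc k t * Real.exp (-(t * x)) ≤ (A * t ^ α) * Real.exp (-(t * x)) :=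
          mul_le_mul_of_nonneg_right (hkA t ht) (Real.exp_pos _).le
      _ = A * (t ^ α * Real.exp (-(t * x))) := by ring
  rw [integral_const_mul] at h1
  have h2 := Real.integral_rpow_mul_exp_neg_mul_Ioi (a := α + 1) (r := x) (by linarith) hx
  rw [show α + 1 - 1 = α by ring] at h2
  rw [h2] at h1
  calc J k 0 x ≤ A * ((1 / x) ^ (α + 1) * Real.Gamma (α + 1)) := h1
    _ = (A * Real.Gamma (α + 1)) * (1 / x) ^ (α + 1) := by ring

end

section
variable {α β : ℝ} (hα : 1 < α) (hβ0 : 0 < β) (hβπ : β ≤ Real.pi)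

include hβ0 hβπ

lemma cos_lt_one' : Real.cos β < 1 := by
  simpa using Real.cos_lt_cos_of_nonneg_of_le_pi le_rfl hβπ hβ0

lemma sin_nonneg' : 0 ≤ Real.sin β := Real.sin_nonneg_of_nonneg_of_le_pi hβ0.le hβπ

omit hβ0 hβπ in
lemma tpow_sq {t : ℝ} (ht : 0 < t) : t ^ (2 * α) = (t ^ α) ^ 2 := by
  rw [show (2:ℝ) * α = α * ((2:ℕ) : ℝ) by push_cast; ring, Real.rpow_mul ht.le,
    Real.rpow_natCast]

lemma denom_pos {t : ℝ} (ht : t ∈ Set.Ioi (0:ℝ)) :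
    0 < t ^ (2 * α) - 2 * t ^ α * Real.cos β + 1 := by
  have ht' : (0:ℝ) < t := ht
  have hu : 0 < t ^ α := Real.rpow_pos_of_pos ht' α
  rw [tpow_sq ht']
  nlinarith [sq_nonneg (t ^ α - 1), mul_pos hu (sub_pos.2 (cos_lt_one' hβ0 hβπ))]

lemma ker_nonneg {t : ℝ} (ht : t ∈ Set.Ioi (0:ℝ)) : 0 ≤ ker α β t :=
  div_nonneg (mul_nonneg (Real.rpow_pos_of_pos ht α).le (sin_nonneg' hβ0 hβπ))
    (denom_pos (α := α) hβ0 hβπ ht).le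

lemma ker_le_K {t : ℝ} (ht : t ∈ Set.Ioi (0:ℝ)) :
    ker α β t ≤ Real.sin β / (2 * (1 - Real.cos β)) := by
  have ht' : (0:ℝ) < t := ht
  have hu : 0 < t ^ α := Real.rpow_pos_of_pos ht' α
  have hd := denom_pos (α := α) hβ0 hβπ ht
  have hcos := cos_lt_one' hβ0 hβπ
  have hs := sin_nonneg' hβ0 hβπ
  rw [ker, div_le_div_iff₀ hd (by nlinarith)]
  rw [tpow_sq ht'] at *
  nlinarith [mul_nonneg hs (sq_nonneg (t ^ α - 1))]

lemma ker_le_A {t : ℝ} (ht : t ∈ Set.Ioi (0:ℝ)) :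
    ker α β t ≤ (Real.sin β / (Real.sin β * Real.sin β)) * t ^ α := by
  have ht' : (0:ℝ) < t := ht
  have hu : 0 < t ^ α := Real.rpow_pos_of_pos ht' α
  have hd := denom_pos (α := α) hβ0 hβπ ht
  rcases eq_or_lt_of_le (sin_nonneg' hβ0 hβπ) with hs | hs
  · rw [ker, ← hs]
    simp
  · have hA : Real.sin β / (Real.sin β * Real.sin β) = 1 / Real.sin β := by
      field_simp
    have hd2 : Real.sin β * Real.sin β ≤ t ^ (2 * α) - 2 * t ^ α * Real.cos β + 1 := by
      rw [tpow_sq ht']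
      nlinarith [sq_nonneg (t ^ α - Real.cos β), Real.sin_sq_add_cos_sq β]
    rw [ker, hA, div_le_iff₀ hd]
    calc t ^ α * Real.sin β = 1 / Real.sin β * t ^ α * (Real.sin β * Real.sin β) := by
          field_simp
      _ ≤ 1 / Real.sin β * t ^ α * (t ^ (2 * α) - 2 * t ^ α * Real.cos β + 1) := by
          apply mul_le_mul_of_nonneg_left hd2 (by positivity)

lemma ker_continuousOn : ContinuousOn (ker α β) (Set.Ioi 0) := by
  have hrpow : ∀ p : ℝ, ContinuousOn (fun t : ℝ => t ^ p) (Set.Ioi 0) := fun p =>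
    ContinuousOn.rpow_const continuousOn_id fun t ht => Or.inl (ne_of_gt ht)
  exact ((hrpow α).mul continuousOn_const).div
    ((((hrpow (2 * α)).sub ((continuousOn_const.mul (hrpow α)).mul continuousOn_const)).add
      continuousOn_const))
    fun t ht => (denom_pos (α := α) hβ0 hβπ ht).ne'

include hα in
lemma ker_integrableOn : IntegrableOn (ker α β) (Set.Ioi 0) := by
  have hα0 : (0:ℝ) < α := by linarith
  have hT : (0:ℝ) < (2:ℝ) ^ α⁻¹ := Real.rpow_pos_of_pos two_pos _
  have hcont := ker_continuousOn (α := α) hβ0 hβπ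
  rw [show Set.Ioi (0:ℝ) = Set.Ioc 0 ((2:ℝ) ^ α⁻¹) ∪ Set.Ioi ((2:ℝ) ^ α⁻¹) from
    (Set.Ioc_union_Ioi_eq_Ioi hT.le).symm]
  refine IntegrableOn.union ?_ ?_
  · refine Integrable.mono' (g := fun _ => Real.sin β / (2 * (1 - Real.cos β)))
      (integrableOn_const measure_Ioc_lt_top.ne)
      ((hcont.mono Set.Ioc_subset_Ioi_self).aestronglyMeasurable measurableSet_Ioc) ?_
    filter_upwards [ae_restrict_mem measurableSet_Ioc] with t ht
    have ht' : t ∈ Set.Ioi (0:ℝ) := Set.Ioc_subset_Ioi_self ht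
    rw [Real.norm_eq_abs, abs_of_nonneg (ker_nonneg hβ0 hβπ ht')]
    exact ker_le_K hβ0 hβπ ht'
  · refine Integrable.mono'
      ((integrableOn_Ioi_rpow_of_lt (by linarith : -α < -1) hT).const_mul (4 * Real.sin β))
      ((hcont.mono (Set.Ioi_subset_Ioi hT.le)).aestronglyMeasurable measurableSet_Ioi) ?_
    filter_upwards [ae_restrict_mem measurableSet_Ioi] with t ht
    have ht0 : (0:ℝ) < t := lt_trans hT ht
    have htIoi : t ∈ Set.Ioi (0:ℝ) := ht0
    have hu : 0 < t ^ α := Real.rpow_pos_of_pos ht0 α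
    have hu2 : 2 < t ^ α := by
      have h2 : ((2:ℝ) ^ α⁻¹) ^ α = 2 := by
        rw [← Real.rpow_mul (by norm_num : (0:ℝ) ≤ 2),
          inv_mul_cancel₀ (by linarith : α ≠ 0), Real.rpow_one]
      calc (2:ℝ) = ((2:ℝ) ^ α⁻¹) ^ α := h2.symm
        _ < t ^ α := Real.rpow_lt_rpow hT.le ht hα0
    rw [Real.norm_eq_abs, abs_of_nonneg (ker_nonneg hβ0 hβπ htIoi),
      Real.rpow_neg ht0.le, ← div_eq_mul_inv]
    have hd := denom_pos (α := α) hβ0 hβπ htIoi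
    have hs := sin_nonneg' hβ0 hβπ
    rw [ker, div_le_div_iff₀ hd hu]
    have hd4 : (t ^ α) ^ 2 / 4 ≤ t ^ (2 * α) - 2 * t ^ α * Real.cos β + 1 := by
      rw [tpow_sq ht0]
      nlinarith [Real.cos_le_one β, mul_nonneg (by linarith : (0:ℝ) ≤ 3 * t ^ α - 2)
        (by linarith : (0:ℝ) ≤ t ^ α - 2)]
    nlinarith [mul_le_mul_of_nonneg_left hd4 hs]

end

section
variable {c α β : ℝ} (hc : 0 ≤ c) (hα : 1 < α) (hβ0 : 0 < β) (hβπ : β ≤ Real.pi)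

include hc hβ0 hβπ

lemma kc_meas : AEStronglyMeasurable (kc c α β) (volume.restrict (Set.Ioi 0)) :=
  ((ker_continuousOn hβ0 hβπ).aestronglyMeasurable measurableSet_Ioi).const_mul c

lemma kc_nonneg : ∀ t ∈ Set.Ioi (0:ℝ), 0 ≤ kc c α β t := fun t ht =>
  mul_nonneg hc (ker_nonneg hβ0 hβπ ht)

lemma kc_le : ∀ t ∈ Set.Ioi (0:ℝ),
    kc c α β t ≤ c * (Real.sin β / (2 * (1 - Real.cos β))) := fun t ht =>
  mul_le_mul_of_nonneg_left (ker_le_K hβ0 hβπ ht) hc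

include hα in
lemma kc_int : IntegrableOn (kc c α β) (Set.Ioi 0) :=
  (ker_integrableOn hα hβ0 hβπ).const_mul c

lemma kc_leA : ∀ t ∈ Set.Ioi (0:ℝ),
    kc c α β t ≤ (c * (Real.sin β / (Real.sin β * Real.sin β))) * t ^ α := fun t ht => by
  have h := mul_le_mul_of_nonneg_left (ker_le_A (α := α) hβ0 hβπ ht) hc
  calc kc c α β t ≤ c * ((Real.sin β / (Real.sin β * Real.sin β)) * t ^ α) := h
    _ = (c * (Real.sin β / (Real.sin β * Real.sin β))) * t ^ α := by ring

lemma J_kc_nonneg (n : ℕ) (x : ℝ) : 0 ≤ J (kc c α β) n x :=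
  J_nonneg (kc_nonneg (α := α) hc hβ0 hβπ) n x

include hα in
lemma J_kc_le_int {x : ℝ} (hx : 0 ≤ x) :
    J (kc c α β) 0 x ≤ ∫ t in Set.Ioi (0:ℝ), kc c α β t :=
  J_le_int (kc_meas (α := α) hc hβ0 hβπ) (kc_nonneg (α := α) hc hβ0 hβπ) (kc_int hc hα hβ0 hβπ) hx

lemma int_kc_nonneg : 0 ≤ ∫ t in Set.Ioi (0:ℝ), kc c α β t :=
  setIntegral_nonneg measurableSet_Ioi (kc_nonneg (α := α) hc hβ0 hβπ)

lemma J_kc_contDiffOn : ContDiffOn ℝ (⊤ : ℕ∞) (J (kc c α β) 0) (Set.Ioi 0) :=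
  (analyticOnNhd_J (kc_meas (α := α) hc hβ0 hβπ) (kc_nonneg (α := α) hc hβ0 hβπ)
    (kc_le (α := α) hc hβ0 hβπ)).contDiffOn (uniqueDiffOn_Ioi 0)

lemma J_kc_iter (n : ℕ) : ∀ x ∈ Set.Ioi (0:ℝ),
    0 ≤ (-1 : ℝ) ^ n * iteratedDerivWithin n (J (kc c α β) 0) (Set.Ioi 0) x := by
  intro x hx
  rw [iteratedDerivWithin_J_eq (kc_meas (α := α) hc hβ0 hβπ) (kc_nonneg (α := α) hc hβ0 hβπ)
      (kc_le (α := α) hc hβ0 hβπ) n x hx, ← mul_assoc, ← mul_pow,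
    show ((-1:ℝ)) * (-1) = 1 by norm_num, one_pow, one_mul]
  exact J_kc_nonneg (α := α) hc hβ0 hβπ n x

include hα in
lemma J_kc_integrableOn : IntegrableOn (J (kc c α β) 0) (Set.Ioi 0) := by
  have hα0 : (0:ℝ) < α := by linarith
  have hcontJ := continuousOn_J (kc_meas (α := α) hc hβ0 hβπ) (kc_nonneg (α := α) hc hβ0 hβπ) (kc_le (α := α) hc hβ0 hβπ)
  rw [show Set.Ioi (0:ℝ) = Set.Ioc 0 1 ∪ Set.Ioi 1 from
    (Set.Ioc_union_Ioi_eq_Ioi zero_le_one).symm]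
  refine IntegrableOn.union ?_ ?_
  · refine Integrable.mono' (g := fun _ => ∫ t in Set.Ioi (0:ℝ), kc c α β t)
      (integrableOn_const measure_Ioc_lt_top.ne)
      ((hcontJ.mono Set.Ioc_subset_Ioi_self).aestronglyMeasurable measurableSet_Ioc) ?_
    filter_upwards [ae_restrict_mem measurableSet_Ioc] with x hx
    rw [Real.norm_eq_abs, abs_of_nonneg (J_kc_nonneg (α := α) hc hβ0 hβπ 0 x)]
    exact J_kc_le_int hc hα hβ0 hβπ hx.1.le
  · refine Integrable.mono'
      ((integrableOn_Ioi_rpow_of_lt (show -(α+1) < -1 by linarith) one_pos).const_mul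
        ((c * (Real.sin β / (Real.sin β * Real.sin β))) * Real.Gamma (α + 1))) ?_ ?_
    · exact (hcontJ.mono (Set.Ioi_subset_Ioi zero_le_one)).aestronglyMeasurable measurableSet_Ioi
    · filter_upwards [ae_restrict_mem measurableSet_Ioi] with x hx
      have hx0 : (0:ℝ) < x := lt_trans one_pos hx
      rw [Real.norm_eq_abs, abs_of_nonneg (J_kc_nonneg (α := α) hc hβ0 hβπ 0 x)]
      have h := J_tail (kc_meas (α := α) hc hβ0 hβπ) (kc_nonneg (α := α) hc hβ0 hβπ) (kc_int hc hα hβ0 hβπ)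
        hα0 (kc_leA (α := α) hc hβ0 hβπ) hx0
      rwa [one_div, Real.inv_rpow hx0.le, ← Real.rpow_neg hx0.le] at h

end

end CM


namespace CM

lemma Gplus_pos_eq {α θ x : ℝ} (hx : 0 < x) :
    Gplus α θ x
      = J (kc (α * Real.sin (Real.pi / α) / Real.pi) α (α * (Real.pi / 2 - θ))) 0 x := by
  rw [Gplus, if_pos hx, J, ← integral_const_mul]
  refine setIntegral_congr_fun measurableSet_Ioi fun t ht => ?_
  simp only [kc, ker, pow_zero, mul_one]
  ring

lemma Gplus_nonpos_eq {α θ x : ℝ} (hx : ¬ 0 < x) :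
    Gplus α θ x
      = J (kc (α * Real.sin (Real.pi / α) / Real.pi) α (α * (Real.pi / 2 + θ))) 0 (-x) := by
  rw [Gplus, if_neg hx, J, ← integral_const_mul]
  refine setIntegral_congr_fun measurableSet_Ioi fun t ht => ?_
  simp only [kc, ker, pow_zero, mul_one]
  rw [show -(t * -x) = t * x by ring]
  ring

end CM

open CM in
theorem stmt1 (α θ : ℝ) (hα1 : 1 < α) (hα2 : α < 2)
    (hθ : |θ| ≤ Real.pi / α - Real.pi / 2) :
    (∃ M : ℝ, ∀ x : ℝ, x ≠ 0 → |Gplus α θ x| ≤ M) ∧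
    Integrable (Gplus α θ) ∧
    (ContDiffOn ℝ (⊤ : ℕ∞) (Gplus α θ) (Set.Ioi 0) ∧
      ∀ n : ℕ, ∀ x : ℝ, 0 < x →
        0 ≤ (-1 : ℝ) ^ n * iteratedDerivWithin n (Gplus α θ) (Set.Ioi 0) x) ∧
    (ContDiffOn ℝ (⊤ : ℕ∞) (fun x => Gplus α θ (-x)) (Set.Ioi 0) ∧
      ∀ n : ℕ, ∀ x : ℝ, 0 < x →
        0 ≤ (-1 : ℝ) ^ n * iteratedDerivWithin n (fun x => Gplus α θ (-x)) (Set.Ioi 0) x) := by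
  have hπ := Real.pi_pos
  have hα0 : (0:ℝ) < α := by linarith
  obtain ⟨hθ1, hθ2⟩ := abs_le.1 hθ
  have hπα : Real.pi / α < Real.pi := div_lt_self hπ hα1
  have hπα0 : 0 < Real.pi / α := by positivity
  have hβ₁0 : 0 < α * (Real.pi / 2 - θ) := by
    apply mul_pos hα0; linarith
  have hβ₁π : α * (Real.pi / 2 - θ) ≤ Real.pi := by
    have h1 : Real.pi / 2 - θ ≤ Real.pi / α := by linarith
    calc α * (Real.pi / 2 - θ) ≤ α * (Real.pi / α) := by
          exact mul_le_mul_of_nonneg_left h1 hα0.le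
      _ = Real.pi := by field_simp
  have hβ₂0 : 0 < α * (Real.pi / 2 + θ) := by
    apply mul_pos hα0; linarith
  have hβ₂π : α * (Real.pi / 2 + θ) ≤ Real.pi := by
    have h1 : Real.pi / 2 + θ ≤ Real.pi / α := by linarith
    calc α * (Real.pi / 2 + θ) ≤ α * (Real.pi / α) := by
          exact mul_le_mul_of_nonneg_left h1 hα0.le
      _ = Real.pi := by field_simp
  set cst := α * Real.sin (Real.pi / α) / Real.pi with hcst
  have hc : 0 ≤ cst := by
    have : 0 ≤ Real.sin (Real.pi / α) := Real.sin_nonneg_of_nonneg_of_le_pi hπα0.le hπα.le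
    rw [hcst]; positivity
  set β₁ := α * (Real.pi / 2 - θ) with hb1
  set β₂ := α * (Real.pi / 2 + θ) with hb2
  have hEq1 : Set.EqOn (Gplus α θ) (J (kc cst α β₁) 0) (Set.Ioi 0) := fun x hx =>
    Gplus_pos_eq hx
  have hEq2 : Set.EqOn (fun x => Gplus α θ (-x)) (J (kc cst α β₂) 0) (Set.Ioi 0) := by
    intro x hx
    have hx' : (0:ℝ) < x := hx
    have h : ¬ (0:ℝ) < -x := by linarith
    simpa using (Gplus_nonpos_eq (α := α) (θ := θ) h)
  refine ⟨?_, ?_, ⟨?_, ?_⟩, ⟨?_, ?_⟩⟩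
  · refine ⟨(∫ t in Set.Ioi (0:ℝ), kc cst α β₁ t) + (∫ t in Set.Ioi (0:ℝ), kc cst α β₂ t),
      fun x hx => ?_⟩
    rcases lt_or_gt_of_ne hx with hneg | hpos
    · rw [Gplus_nonpos_eq (by linarith)]
      rw [abs_of_nonneg (J_kc_nonneg hc hβ₂0 hβ₂π 0 (-x))]
      have h1 := J_kc_le_int hc hα1 hβ₂0 hβ₂π (x := -x) (by linarith)
      have h2 := int_kc_nonneg (c := cst) (α := α) hc hβ₁0 hβ₁π
      linarith
    · rw [hEq1 hpos, abs_of_nonneg (J_kc_nonneg hc hβ₁0 hβ₁π 0 x)]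
      have h1 := J_kc_le_int hc hα1 hβ₁0 hβ₁π hpos.le
      have h2 := int_kc_nonneg (c := cst) (α := α) hc hβ₂0 hβ₂π
      linarith
  · have hIoi : IntegrableOn (Gplus α θ) (Set.Ioi 0) := by
      refine (J_kc_integrableOn hc hα1 hβ₁0 hβ₁π).congr ?_
      filter_upwards [ae_restrict_mem measurableSet_Ioi] with x hx
      exact (hEq1 hx).symm
    have hIci : IntegrableOn (fun x => Gplus α θ (-x)) (Set.Ici 0) := by
      rw [integrableOn_Ici_iff_integrableOn_Ioi]
      refine (J_kc_integrableOn hc hα1 hβ₂0 hβ₂π).congr ?_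
      filter_upwards [ae_restrict_mem measurableSet_Ioi] with x hx
      exact (hEq2 hx).symm
    have hIic : IntegrableOn (Gplus α θ) (Set.Iic 0) := by
      have hpre := ((Measure.measurePreserving_neg (volume : Measure ℝ)).integrableOn_comp_preimage
        (Homeomorph.neg ℝ).measurableEmbedding (f := Gplus α θ) (s := Set.Iic 0)).1
      have hset : (Neg.neg ⁻¹' Set.Iic (0:ℝ)) = Set.Ici 0 := by ext x; simp
      apply hpre
      rw [hset]
      exact hIci
    have : IntegrableOn (Gplus α θ) (Set.Iic 0 ∪ Set.Ioi 0) := hIic.union hIoi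
    rwa [Set.Iic_union_Ioi, integrableOn_univ] at this
  · exact (J_kc_contDiffOn hc hβ₁0 hβ₁π).congr fun x hx => hEq1 hx
  · intro n x hx
    rw [iteratedDerivWithin_congr hEq1 hx]
    exact J_kc_iter hc hβ₁0 hβ₁π n x hx
  · exact (J_kc_contDiffOn hc hβ₂0 hβ₂π).congr fun x hx => hEq2 hx
  · intro n x hx
    rw [iteratedDerivWithin_congr hEq2 hx]
    exact J_kc_iter hc hβ₂0 hβ₂π n x hx
end
end

section
/- Let f : ℝ → ℝ be Borel measurable and suppose that for every g in the class 𝓗 the integral ∫_ℝ f(x) g(x) dx converges absolutely and equals 0. Then f(x) = 0 for almost every x ∈ ℝ. -/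
open MeasureTheory Filter

noncomputable section

/-!
It suffices to test `f` against `g_s(x) = x^{-x} e^{-s x}` on `(0, ∞)` (zero elsewhere) and its
reflection: `z ↦ exp (-z log z - s z)` is holomorphic on the right half-plane, and on a sector
`|arg z| ≤ π/2 - ε` we have `Re z ≥ |z| sin ε`, so it is `O(|z|^{-(sin ε / 2)|z|})`; hence
`g_s ∈ 𝓗₊`. Orthogonality to `g_n`, `n ∈ ℕ`, says that `F(x) = f(x) x^{-x}` has vanishing moments
`∫₀^∞ F(x) (e^{-x})^n dx`. By Weierstrass approximation, `∫₀^∞ F(x) q(e^{-x}) dx = 0` for every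
continuous `q`, and `q(e^{-x}) = φ(x)` can be arranged for any compactly supported smooth `φ`, so
`F = 0` a.e. on `(0, ∞)`. The reflected test functions handle `(-∞, 0)` in the same way.
-/

open Set Real Polynomial Topology

section Weierstrass

variable {α : Type*} [MeasurableSpace α] {μ : Measure α} {F φ : α → ℝ}

lemma MeasureTheory.Integrable.mul_comp_of_ae_mem_Icc (hF : Integrable F μ) (hφ : AEMeasurable φ μ)
    (hφI : ∀ᵐ x ∂μ, φ x ∈ Icc (0 : ℝ) 1) {q : ℝ → ℝ} (hq : Continuous q) :
    Integrable (fun x => F x * q (φ x)) μ := by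
  obtain ⟨C, hC⟩ := (isCompact_Icc (a := (0 : ℝ)) (b := 1)).exists_bound_of_continuousOn
    hq.continuousOn
  exact hF.mul_bdd (hq.measurable.comp_aemeasurable hφ).aestronglyMeasurable
    (hφI.mono fun x hx => hC _ hx)

lemma integral_mul_eval_comp_eq_zero_of_moments (hF : Integrable F μ) (hφ : AEMeasurable φ μ)
    (hφI : ∀ᵐ x ∂μ, φ x ∈ Icc (0 : ℝ) 1) (hmom : ∀ n : ℕ, ∫ x, F x * φ x ^ n ∂μ = 0)
    (p : ℝ[X]) :
    ∫ x, F x * p.eval (φ x) ∂μ = 0 := by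
  simp_rw [eval_eq_sum_range, Finset.mul_sum]
  rw [integral_finsetSum]
  · refine Finset.sum_eq_zero fun n _ => ?_
    simp_rw [mul_left_comm (F _)]
    rw [integral_const_mul, hmom, mul_zero]
  · exact fun n _ => hF.mul_comp_of_ae_mem_Icc hφ hφI (continuous_const.mul (continuous_pow n))

lemma integral_mul_comp_eq_zero_of_moments (hF : Integrable F μ) (hφ : AEMeasurable φ μ)
    (hφI : ∀ᵐ x ∂μ, φ x ∈ Icc (0 : ℝ) 1) (hmom : ∀ n : ℕ, ∫ x, F x * φ x ^ n ∂μ = 0)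
    {q : ℝ → ℝ} (hq : Continuous q) :
    ∫ x, F x * q (φ x) ∂μ = 0 := by
  refine eq_of_forall_dist_le fun ε hε => ?_
  set B := ∫ x, ‖F x‖ ∂μ
  have hB : 0 ≤ B := integral_nonneg fun _ => norm_nonneg _
  obtain ⟨p, hp⟩ := exists_polynomial_near_of_continuousOn 0 1 q hq.continuousOn
    (ε / (B + 1)) (by positivity)
  have hqp : ∀ᵐ x ∂μ, ‖F x * q (φ x) - F x * p.eval (φ x)‖ ≤ ε / (B + 1) * ‖F x‖ := by
    filter_upwards [hφI] with x hx
    rw [← mul_sub, norm_mul, mul_comm, Real.norm_eq_abs, abs_sub_comm]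
    exact mul_le_mul_of_nonneg_right (hp _ hx).le (norm_nonneg _)
  calc dist (∫ x, F x * q (φ x) ∂μ) 0
      = ‖∫ x, (F x * q (φ x) - F x * p.eval (φ x)) ∂μ‖ := by
        rw [integral_sub (hF.mul_comp_of_ae_mem_Icc hφ hφI hq)
          (hF.mul_comp_of_ae_mem_Icc hφ hφI p.continuous),
          integral_mul_eval_comp_eq_zero_of_moments hF hφ hφI hmom, sub_zero, dist_zero_right]
    _ ≤ ∫ x, ε / (B + 1) * ‖F x‖ ∂μ := norm_integral_le_of_norm_le (hF.norm.const_mul _) hqp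
    _ = ε * (B / (B + 1)) := by rw [integral_const_mul]; ring
    _ ≤ ε := mul_le_of_le_one_right hε.le ((div_le_one (by positivity)).2 (by linarith))

end Weierstrass

lemma HasCompactSupport.continuous_extend_zero_of_isOpenEmbedding {X Y M : Type*}
    [TopologicalSpace X] [TopologicalSpace Y] [T2Space Y] [TopologicalSpace M] [Zero M] {e : X → Y}
    {g : X → M} (he : IsOpenEmbedding e) (hg : HasCompactSupport g) (hgc : Continuous g) :
    Continuous (Function.extend e g 0) :=
  continuous_of_tsupport fun _ hy => by
    obtain ⟨x, -, rfl⟩ := hg.tsupport_extend_zero_subset he.continuous hy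
    rw [← he.continuousAt_iff, Function.extend_comp he.injective]
    exact hgc.continuousAt

lemma ae_restrict_Ioi_eq_zero_of_integral_mul_exp_neg_nat_mul {F : ℝ → ℝ}
    (hF : IntegrableOn F (Ioi 0))
    (hmom : ∀ n : ℕ, ∫ x in Ioi 0, F x * exp (-(n * x)) = 0) :
    ∀ᵐ x ∂volume.restrict (Ioi 0), F x = 0 := by
  have hφI : ∀ᵐ x ∂volume.restrict (Ioi 0), exp (-x) ∈ Icc (0 : ℝ) 1 :=
    (ae_restrict_iff' measurableSet_Ioi).2 <| ae_of_all _ fun x (hx : 0 < x) =>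
      ⟨(exp_pos _).le, exp_le_one_iff.2 (by linarith)⟩
  have hmom' : ∀ n : ℕ, ∫ x in Ioi 0, F x * exp (-x) ^ n = 0 := fun n => by
    simpa [← exp_nat_mul, mul_neg] using hmom n
  have he : IsOpenEmbedding fun x : ℝ => exp (-x) :=
    isOpenEmbedding_exp.comp (Homeomorph.neg ℝ).isOpenEmbedding
  refine ae_eq_zero_of_integral_contDiff_smul_eq_zero hF.locallyIntegrable fun g hg hgs => ?_
  have hq := hgs.continuous_extend_zero_of_isOpenEmbedding he hg.continuous
  simpa [mul_comm, Function.Injective.extend_apply he.injective] using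
    integral_mul_comp_eq_zero_of_moments hF (by fun_prop) hφI hmom' hq

def expNegMulLogSub (s : ℝ) : ℝ → ℝ := (Ioi 0).indicator fun x => exp (-(x * log x) - s * x)

lemma norm_cexp_neg_mul_log_sub_mul_le (s : ℝ) (z : ℂ) :
    ‖Complex.exp (-(z * Complex.log z) - s * z)‖ ≤
      exp (-(z.re * log ‖z‖) + (π + |s|) * ‖z‖) := by
  have hre : (-(z * Complex.log z) - s * z).re =
      -(z.re * log ‖z‖) + z.im * z.arg - s * z.re := by
    simp only [Complex.sub_re, Complex.neg_re, Complex.mul_re, Complex.log_re, Complex.log_im,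
      Complex.ofReal_re, Complex.ofReal_im, zero_mul, sub_zero]
    ring
  have him : z.im * z.arg ≤ π * ‖z‖ :=
    calc z.im * z.arg ≤ |z.im| * |z.arg| := by rw [← abs_mul]; exact le_abs_self _
      _ ≤ ‖z‖ * π := mul_le_mul (Complex.abs_im_le_norm z) (Complex.abs_arg_le_pi z)
          (abs_nonneg _) (norm_nonneg _)
      _ = π * ‖z‖ := mul_comm _ _
  have hs : -(s * z.re) ≤ |s| * ‖z‖ :=
    calc -(s * z.re) ≤ |s| * |z.re| := by rw [← abs_mul]; exact neg_le_abs _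
      _ ≤ |s| * ‖z‖ := mul_le_mul_of_nonneg_left (Complex.abs_re_le_norm z) (abs_nonneg s)
  rw [Complex.norm_exp, hre]
  exact exp_le_exp.2 (by linarith)

lemma neg_re_mul_log_norm_le_one {z : ℂ} (hz : 0 < z.re) : -(z.re * log ‖z‖) ≤ 1 := by
  rcases le_or_gt 1 ‖z‖ with h1 | h1
  · have := mul_nonneg hz.le (log_nonneg h1)
    linarith
  · have hr : 0 < ‖z‖ := hz.trans_le (Complex.re_le_norm z)
    calc -(z.re * log ‖z‖) ≤ ‖z‖ * |log ‖z‖| := by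
          rw [← mul_neg, abs_of_neg (log_neg hr h1)]
          exact mul_le_mul_of_nonneg_right (Complex.re_le_norm z)
            (neg_nonneg.2 (log_nonpos hr.le h1.le))
      _ ≤ 1 := by
          have := abs_log_mul_self_lt ‖z‖ hr h1.le
          rw [abs_mul, abs_of_pos hr] at this
          linarith

lemma norm_mul_sin_le_re_of_abs_arg_le {z : ℂ} {ε : ℝ} (hε : 0 ≤ ε)
    (harg : |z.arg| ≤ π / 2 - ε) : ‖z‖ * sin ε ≤ z.re := by
  rw [← Complex.norm_mul_cos_arg, ← cos_abs z.arg, ← cos_pi_div_two_sub]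
  exact mul_le_mul_of_nonneg_left
    (cos_le_cos_of_nonneg_of_le_pi (abs_nonneg _) (by linarith [pi_pos]) harg) (norm_nonneg z)

lemma hplus_expNegMulLogSub (s : ℝ) : Hplus (expNegMulLogSub s) := by
  refine ⟨fun x hx => indicator_of_notMem (not_lt.2 hx.le) _,
    fun z => Complex.exp (-(z * Complex.log z) - s * z), fun z hz => ?_, fun x hx => ?_, ?_⟩
  · have hz : z ∈ Complex.slitPlane := Or.inl hz
    exact (((differentiableAt_id.mul (Complex.differentiableAt_log hz)).neg.sub
      ((differentiableAt_const _).mul differentiableAt_id)).cexp).differentiableWithinAt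
  · dsimp only
    rw [expNegMulLogSub, indicator_of_mem (show x ∈ Ioi 0 from hx), ← Complex.ofReal_log hx.le]
    push_cast
    rfl
  intro ε hε _
  set a := π + |s|
  have ha : 0 ≤ a := by positivity
  have hsin : 0 < sin ε := sin_pos_of_pos_of_lt_pi hε (by linarith)
  set R := exp (2 * a / sin ε)
  have hR : 1 ≤ R := one_le_exp (by positivity)
  refine ⟨sin ε / 2, by positivity, exp (1 + a * R), exp_pos _, R, by positivity,
    fun z hz harg => ⟨fun hRz => ?_, fun hzR => ?_⟩⟩
  · have hr : 0 < ‖z‖ := by linarith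
    have hlog : 2 * a ≤ sin ε * log ‖z‖ := by
      rw [← div_le_iff₀' hsin, ← log_exp (2 * a / sin ε)]
      exact log_le_log (exp_pos _) hRz
    have hre := norm_mul_sin_le_re_of_abs_arg_le hε.le harg
    have hlog0 : 0 ≤ log ‖z‖ := log_nonneg (hR.trans hRz)
    calc _ ≤ exp (-(z.re * log ‖z‖) + a * ‖z‖) := norm_cexp_neg_mul_log_sub_mul_le s z
      _ ≤ exp (-(sin ε / 2 * ‖z‖ * log ‖z‖)) := exp_le_exp.2 <| by
          nlinarith [mul_le_mul_of_nonneg_right hre hlog0, mul_le_mul_of_nonneg_left hlog hr.le]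
      _ = ‖z‖ ^ (-(sin ε / 2 * ‖z‖)) := by rw [rpow_def_of_pos hr]; ring_nf
      _ ≤ exp (1 + a * R) * ‖z‖ ^ (-(sin ε / 2 * ‖z‖)) :=
          le_mul_of_one_le_left (rpow_nonneg hr.le _) (one_le_exp (by positivity))
  · calc _ ≤ exp (-(z.re * log ‖z‖) + a * ‖z‖) := norm_cexp_neg_mul_log_sub_mul_le s z
      _ ≤ exp (1 + a * R) := exp_le_exp.2 <|
          add_le_add (neg_re_mul_log_norm_le_one hz) (mul_le_mul_of_nonneg_left hzR ha)

lemma hplus_zero : Hplus 0 :=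
  ⟨fun _ _ => rfl, 0, differentiableOn_const 0, fun _ _ => by simp,
    fun _ _ _ => ⟨1, one_pos, 1, one_pos, 1, one_pos, fun _ _ _ => ⟨fun _ => by rw [Pi.zero_apply, norm_zero]; positivity,
      fun _ => by simp⟩⟩⟩

lemma Hplus.hclass {g : ℝ → ℝ} (hg : Hplus g) : Hclass g :=
  ⟨g, 0, hg, hplus_zero, fun _ => (add_zero _).symm⟩

lemma Hplus.hclass_comp_neg {g : ℝ → ℝ} (hg : Hplus g) : Hclass fun x => g (-x) :=
  ⟨0, fun x => g (-x), hplus_zero, by simpa [Hminus] using hg, fun _ => (zero_add _).symm⟩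

lemma ae_pos_imp_eq_zero_of_integral_mul_expNegMulLogSub {f : ℝ → ℝ}
    (h : ∀ n : ℕ, Integrable (fun x => f x * expNegMulLogSub n x) ∧
      ∫ x, f x * expNegMulLogSub n x = 0) :
    ∀ᵐ x, 0 < x → f x = 0 := by
  set F := fun x => f x * exp (-(x * log x))
  have hFn : ∀ n : ℕ, (fun x => f x * expNegMulLogSub n x) =
      (Ioi 0).indicator fun x => F x * exp (-(n * x)) := by
    intro n
    ext x
    rw [expNegMulLogSub, ← indicator_mul_right]
    congr 1
    ext x
    rw [sub_eq_add_neg, exp_add, mul_assoc]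
  have hF : IntegrableOn F (Ioi 0) := by
    have := (h 0).1
    rw [hFn, integrable_indicator_iff measurableSet_Ioi] at this
    simpa using this
  have hmom : ∀ n : ℕ, ∫ x in Ioi 0, F x * exp (-(n * x)) = 0 := fun n => by
    simpa [hFn, integral_indicator measurableSet_Ioi] using (h n).2
  refine (ae_restrict_iff' measurableSet_Ioi).1 ?_
  filter_upwards [ae_restrict_Ioi_eq_zero_of_integral_mul_exp_neg_nat_mul hF hmom] with x hx
  exact (mul_eq_zero.1 hx).resolve_right (exp_ne_zero _)

theorem stmt4_general (f : ℝ → ℝ)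
    (h : ∀ g : ℝ → ℝ, Hclass g →
      Integrable (fun x => f x * g x) ∧ (∫ x : ℝ, f x * g x) = 0) :
    ∀ᵐ x : ℝ, f x = 0 := by
  have hpos := ae_pos_imp_eq_zero_of_integral_mul_expNegMulLogSub fun n =>
    h _ (hplus_expNegMulLogSub n).hclass
  have hneg : ∀ᵐ x, 0 < x → f (-x) = 0 :=
    ae_pos_imp_eq_zero_of_integral_mul_expNegMulLogSub fun n => by
      obtain ⟨hint, hzero⟩ := h _ (hplus_expNegMulLogSub n).hclass_comp_neg
      refine ⟨by simpa using hint.comp_neg, ?_⟩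
      rw [← hzero, ← integral_neg_eq_self]
      simp
  replace hneg : ∀ᵐ x, x < 0 → f x = 0 := by
    simpa using (Measure.measurePreserving_neg volume).quasiMeasurePreserving.ae hneg
  filter_upwards [hpos, hneg, Measure.ae_ne volume 0] with x hx_pos hx_neg hx_ne
  rcases hx_ne.lt_or_gt with hx | hx
  · exact hx_neg hx
  · exact hx_pos hx

theorem stmt4 (f : ℝ → ℝ) (hmeas : Measurable f)
    (h : ∀ g : ℝ → ℝ, Hclass g →
      Integrable (fun x => f x * g x) ∧ (∫ x : ℝ, f x * g x) = 0) :
    ∀ᵐ x : ℝ, f x = 0 :=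
  stmt4_general f h
end
end

section
/- Let α ∈ (1,2) and let h : (0,∞) → ℝ be continuously differentiable with |h(r)| ≤ c₁ min{1, r^{−1}} and |h'(r)| ≤ c₂ min{1, r^{−2}} for all r > 0. For s > 0 let K(s) = p.v.∫_0^∞ h(r)/(r^α − s^α) dr, the principal value being the limit as ε → 0⁺ of the integral over (0,∞) \ (s−ε, s+ε). Then this principal value exists for every s > 0, and there is a constant C depending only on α, c₁, c₂ such that |K(s)| ≤ C s^{1−α} if 0 < s < 1 and |K(s)| ≤ C s^{−α} log(1 + s) if s ≥ 1. -/
open MeasureTheory Filter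

noncomputable section

/-!
Cut `(0, ∞)` at `s/2` and `3s/2`. Away from `s` the denominator is comparable to `max(r, s)^α`,
so the bound on `h` gives integrable majorants: `c₁ s^(-α) min(1, 1/r)` on `(0, s/2]`, whose
integral produces the logarithm, and `c₁ min(1, 1/s) r^(-α)` on `[3s/2, ∞)`. Near `s`, the singular
part `h(s) / (α s^(α-1) (r - s))` integrates to zero over every set symmetric about `s`, so the
principal value exists as soon as the remainder is integrable; by the mean value theorem applied to
`h`, to `r ↦ r^α` and to its derivative, the remainder is bounded on `(s/2, 3s/2)` by
`sup |h'| / inf (r^α)' + |h(s)| sup |(r^α)''| / (inf (r^α)' · α s^(α-1))`.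
-/

open Set Topology

theorem setIntegral_inv_sub_eq_zero_of_symm {A : Set ℝ} (hA : MeasurableSet A) {s : ℝ}
    (hsymm : ∀ x ∈ A, 2 * s - x ∈ A) : ∫ r in A, (r - s)⁻¹ = 0 := by
  have hodd : ∀ x, A.indicator (fun r => (r - s)⁻¹) (2 * s - x) =
      -A.indicator (fun r => (r - s)⁻¹) x := by
    intro x
    have hmem : 2 * s - x ∈ A ↔ x ∈ A :=
      ⟨fun hx => by simpa using hsymm _ hx, hsymm x⟩
    by_cases hx : x ∈ A
    · rw [indicator_of_mem (hmem.2 hx), indicator_of_mem hx, ← inv_neg]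
      ring_nf
    · rw [indicator_of_notMem (mt hmem.1 hx), indicator_of_notMem hx, neg_zero]
  have := integral_sub_left_eq_self (A.indicator fun r => (r - s)⁻¹) volume (2 * s)
  simp only [hodd, integral_neg, integral_indicator hA] at this
  linarith

theorem integrableOn_inv_sub_diff_Ioo {s δ ε : ℝ} (hε : 0 < ε) :
    IntegrableOn (fun r => (r - s)⁻¹) (Ioo (s - δ) (s + δ) \ Ioo (s - ε) (s + ε)) := by
  have hR : MeasurableSet (Ioo (s - δ) (s + δ) \ Ioo (s - ε) (s + ε)) :=
    measurableSet_Ioo.diff measurableSet_Ioo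
  refine Measure.integrableOn_of_bounded (M := ε⁻¹)
    ((measure_mono sdiff_subset).trans_lt measure_Ioo_lt_top).ne (by fun_prop)
    (ae_restrict_of_forall_mem hR fun r hr => ?_)
  have : ε ≤ |r - s| := by
    by_contra! hlt
    exact hr.2 ⟨by linarith [neg_abs_le (r - s)], by linarith [le_abs_self (r - s)]⟩
  rw [norm_inv, Real.norm_eq_abs]
  exact inv_anti₀ hε this

theorem setIntegral_diff_Ioo_eq {f : ℝ → ℝ} {S : Set ℝ} {s δ ε a : ℝ} (hε : 0 < ε)
    (hεδ : ε ≤ δ) (hsub : Ioo (s - δ) (s + δ) ⊆ S) (hf : IntegrableOn f (S \ Ioo (s - δ) (s + δ)))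
    (hg : IntegrableOn (fun r => f r - a * (r - s)⁻¹) (Ioo (s - δ) (s + δ))) :
    ∫ r in S \ Ioo (s - ε) (s + ε), f r =
      (∫ r in S \ Ioo (s - δ) (s + δ), f r) +
        ((∫ r in Ioo (s - δ) (s + δ), (f r - a * (r - s)⁻¹)) -
          ∫ r in Ioo (s - ε) (s + ε), (f r - a * (r - s)⁻¹)) := by
  have hIε : Ioo (s - ε) (s + ε) ⊆ Ioo (s - δ) (s + δ) :=
    Ioo_subset_Ioo (by linarith) (by linarith)
  set R := Ioo (s - δ) (s + δ) \ Ioo (s - ε) (s + ε)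
  have hR : MeasurableSet R := measurableSet_Ioo.diff measurableSet_Ioo
  have hinv : IntegrableOn (fun r => (r - s)⁻¹) R := integrableOn_inv_sub_diff_Ioo hε
  have hfg : EqOn f (fun r => (f r - a * (r - s)⁻¹) + a * (r - s)⁻¹) R := fun r _ => by simp
  have hfR : IntegrableOn f R :=
    ((hg.mono_set sdiff_subset).add (hinv.const_mul a)).congr_fun hfg.symm hR
  have hzero : ∫ r in R, (r - s)⁻¹ = 0 :=
    setIntegral_inv_sub_eq_zero_of_symm hR fun x hx =>
      ⟨⟨by linarith [hx.1.2], by linarith [hx.1.1]⟩,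
        fun h => hx.2 ⟨by linarith [h.2], by linarith [h.1]⟩⟩
  have hdisj : Disjoint (S \ Ioo (s - δ) (s + δ)) R :=
    disjoint_sdiff_left.mono_right sdiff_subset
  rw [← sdiff_union_sdiff_cancel hsub hIε, setIntegral_union hdisj hR hf hfR,
    setIntegral_congr_fun hR hfg, integral_add (hg.mono_set sdiff_subset) (hinv.const_mul a),
    integral_const_mul, hzero, mul_zero, add_zero, setIntegral_sdiff measurableSet_Ioo hg hIε]

theorem tendsto_setIntegral_Ioo_nhdsGT_zero {g : ℝ → ℝ} {s δ : ℝ} (hδ : 0 < δ)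
    (hg : IntegrableOn g (Ioo (s - δ) (s + δ))) :
    Tendsto (fun ε => ∫ r in Ioo (s - ε) (s + ε), g r) (𝓝[>] 0) (𝓝 0) := by
  have hvol : Tendsto (fun ε => volume (Ioo (s - ε) (s + ε))) (𝓝[>] 0) (𝓝 0) := by
    simp only [Real.volume_Ioo]
    rw [← ENNReal.ofReal_zero]
    exact ENNReal.tendsto_ofReal (tendsto_nhdsWithin_of_tendsto_nhds
      ((by fun_prop : Continuous fun ε : ℝ => s + ε - (s - ε)).tendsto' 0 0 (by ring)))
  refine (hg.tendsto_setIntegral_nhds_zero (tendsto_of_tendsto_of_tendsto_of_le_of_le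
    tendsto_const_nhds hvol (fun _ => zero_le) fun ε => Measure.restrict_apply_le _ _)).congr'
    (eventually_of_mem (Ioo_mem_nhdsGT hδ) fun ε hε => ?_)
  rw [Measure.restrict_restrict measurableSet_Ioo,
    inter_eq_left.2 (Ioo_subset_Ioo (by linarith [hε.2]) (by linarith [hε.2]))]

theorem tendsto_setIntegral_diff_Ioo {f : ℝ → ℝ} {S : Set ℝ} {s δ a : ℝ} (hδ : 0 < δ)
    (hsub : Ioo (s - δ) (s + δ) ⊆ S) (hf : IntegrableOn f (S \ Ioo (s - δ) (s + δ)))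
    (hg : IntegrableOn (fun r => f r - a * (r - s)⁻¹) (Ioo (s - δ) (s + δ))) :
    Tendsto (fun ε => ∫ r in S \ Ioo (s - ε) (s + ε), f r) (𝓝[>] 0)
      (𝓝 ((∫ r in S \ Ioo (s - δ) (s + δ), f r) +
        ∫ r in Ioo (s - δ) (s + δ), (f r - a * (r - s)⁻¹))) := by
  have hlim := (tendsto_const_nhds (x := ∫ r in S \ Ioo (s - δ) (s + δ), f r)).add
    ((tendsto_const_nhds (x := ∫ r in Ioo (s - δ) (s + δ), (f r - a * (r - s)⁻¹))).sub
      (tendsto_setIntegral_Ioo_nhdsGT_zero hδ hg))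
  rw [sub_zero] at hlim
  exact hlim.congr' (eventually_of_mem (Ioo_mem_nhdsGT hδ) fun ε hε =>
    (setIntegral_diff_Ioo_eq hε.1 hε.2.le hsub hf hg).symm)

theorem abs_div_sub_div_mul_inv_le {x y Δ d D A B L : ℝ} (hL : 0 < L) (hD : 0 < D) (hd : d ≠ 0)
    (hxy : |x - y| ≤ A * |d|) (hΔ : L * |d| ≤ |Δ|) (hΔD : |Δ - D * d| ≤ B * |d| ^ 2) :
    |x / Δ - y / D * d⁻¹| ≤ A / L + |y| * B / (L * D) := by
  have hd' : 0 < |d| := abs_pos.2 hd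
  have hΔ0 : Δ ≠ 0 := abs_pos.1 ((mul_pos hL hd').trans_le hΔ)
  have hsplit : x / Δ - y / D * d⁻¹ = (x - y) / Δ - y * (Δ - D * d) / (Δ * D * d) := by
    field_simp
    ring
  have h1 : |(x - y) / Δ| ≤ A / L := by
    rw [abs_div, div_le_div_iff₀ ((mul_pos hL hd').trans_le hΔ) hL]
    have hA : 0 ≤ A := (mul_nonneg_iff_of_pos_right hd').1 ((abs_nonneg _).trans hxy)
    nlinarith [mul_le_mul_of_nonneg_right hxy hL.le, mul_le_mul_of_nonneg_left hΔ hA]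
  have h2 : |y * (Δ - D * d) / (Δ * D * d)| ≤ |y| * B / (L * D) := by
    rw [abs_div, abs_mul, abs_mul, abs_mul, abs_of_pos hD,
      div_le_div_iff₀ (by positivity) (by positivity)]
    have := mul_le_mul hΔD (mul_le_mul_of_nonneg_right hΔ hD.le) (by positivity)
      (by nlinarith [abs_nonneg (Δ - D * d)])
    nlinarith [abs_nonneg y]
  rw [hsplit]
  exact (abs_sub _ _).trans (add_le_add h1 h2)

theorem Convex.abs_sub_sub_mul_sub_le {φ φ' φ'' : ℝ → ℝ} {I : Set ℝ} (hI : Convex ℝ I)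
    {B r s : ℝ} (hφ : ∀ x ∈ I, HasDerivAt φ (φ' x) x) (hφ' : ∀ x ∈ I, HasDerivAt φ' (φ'' x) x)
    (hB : ∀ x ∈ I, |φ'' x| ≤ B) (hr : r ∈ I) (hs : s ∈ I) :
    |φ r - φ s - φ' s * (r - s)| ≤ B * |r - s| ^ 2 := by
  have hseg : uIcc s r ⊆ I := hI.ordConnected.uIcc_subset hs hr
  have hlip : ∀ x ∈ uIcc s r, |φ' x - φ' s| ≤ B * |r - s| := fun x hx =>
    (hI.norm_image_sub_le_of_norm_hasDerivWithin_le (fun y hy => (hφ' y hy).hasDerivWithinAt)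
      hB hs (hseg hx)).trans (mul_le_mul_of_nonneg_left (abs_sub_left_of_mem_uIcc hx)
        ((abs_nonneg _).trans (hB s hs)))
  have := (convex_uIcc s r).norm_image_sub_le_of_norm_hasDerivWithin_le
    (f := fun x => φ x - φ' s * x) (f' := fun x => φ' x - φ' s)
    (fun x hx => ((hφ x (hseg hx)).sub ((hasDerivAt_id' x).const_mul (φ' s))).hasDerivWithinAt
      |>.congr_deriv (by rw [mul_one]))
    hlip left_mem_uIcc right_mem_uIcc
  rw [show φ r - φ s - φ' s * (r - s) = φ r - φ' s * r - (φ s - φ' s * s) by ring, sq,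
    ← mul_assoc]
  exact this

theorem Convex.mul_abs_sub_le_abs_sub {φ φ' : ℝ → ℝ} {I : Set ℝ} (hI : Convex ℝ I) {L r s : ℝ}
    (hφ : ∀ x ∈ I, HasDerivAt φ (φ' x) x) (hL : ∀ x ∈ I, L ≤ φ' x) (hr : r ∈ I) (hs : s ∈ I) :
    L * |r - s| ≤ |φ r - φ s| := by
  have key := hI.mul_sub_le_image_sub_of_le_deriv
    (fun x hx => (hφ x hx).continuousAt.continuousWithinAt)
    (fun x hx => (hφ x (interior_subset hx)).differentiableAt.differentiableWithinAt)
    (fun x hx => (hφ x (interior_subset hx)).deriv ▸ hL x (interior_subset hx))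
  rcases le_total s r with hsr | hrs
  · rw [abs_of_nonneg (sub_nonneg.2 hsr)]
    exact (key s hs r hr hsr).trans (le_abs_self _)
  · rw [abs_sub_comm, abs_sub_comm (φ r), abs_of_nonneg (sub_nonneg.2 hrs)]
    exact (key r hr s hs hrs).trans (le_abs_self _)

theorem abs_div_sub_sub_div_mul_inv_le {h h' φ φ' φ'' : ℝ → ℝ} {I : Set ℝ} (hI : Convex ℝ I)
    {A B L r s : ℝ} (hL : 0 < L)
    (hh : ∀ x ∈ I, HasDerivAt h (h' x) x) (hh' : ∀ x ∈ I, |h' x| ≤ A)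
    (hφ : ∀ x ∈ I, HasDerivAt φ (φ' x) x) (hφ' : ∀ x ∈ I, L ≤ φ' x)
    (hφ'' : ∀ x ∈ I, HasDerivAt φ' (φ'' x) x) (hφ''B : ∀ x ∈ I, |φ'' x| ≤ B)
    (hr : r ∈ I) (hs : s ∈ I) :
    |h r / (φ r - φ s) - h s / φ' s * (r - s)⁻¹| ≤ A / L + |h s| * B / (L * φ' s) := by
  have hD : 0 < φ' s := hL.trans_le (hφ' s hs)
  rcases eq_or_ne r s with rfl | hrs
  · have hA : 0 ≤ A := (abs_nonneg _).trans (hh' r hs)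
    have hB : 0 ≤ B := (abs_nonneg _).trans (hφ''B r hs)
    simp only [sub_self, div_zero, inv_zero, mul_zero, abs_zero]
    positivity
  exact abs_div_sub_div_mul_inv_le hL hD (sub_ne_zero.2 hrs)
    (hI.norm_image_sub_le_of_norm_hasDerivWithin_le (fun x hx => (hh x hx).hasDerivWithinAt)
      hh' hs hr)
    (hI.mul_abs_sub_le_abs_sub hφ hφ' hr hs) (hI.abs_sub_sub_mul_sub_le hφ hφ'' hφ''B hr hs)

theorem Real.rpow_le_mul_rpow_of_le_mul {x y θ α : ℝ} (hx : 0 ≤ x) (hy : 0 ≤ y) (hθ : 0 ≤ θ)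
    (hθ1 : θ ≤ 1) (hα : 1 ≤ α) (hxy : x ≤ θ * y) : x ^ α ≤ θ * y ^ α :=
  calc x ^ α ≤ (θ * y) ^ α := Real.rpow_le_rpow hx hxy (by linarith)
    _ = θ ^ α * y ^ α := Real.mul_rpow hθ hy
    _ ≤ θ * y ^ α := by
      gcongr
      simpa using Real.rpow_le_rpow_of_exponent_ge' hθ hθ1 zero_le_one hα

theorem min_one_inv_le_two_mul_inv_one_add {r : ℝ} (hr : 0 < r) : min 1 r⁻¹ ≤ 2 * (1 + r)⁻¹ := by
  rcases le_total r 1 with h | h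
  · refine (min_le_left _ _).trans ?_
    rw [← div_eq_mul_inv, le_div_iff₀ (by linarith)]
    linarith
  · refine (min_le_right _ _).trans ?_
    rw [← div_eq_mul_inv, inv_eq_one_div, div_le_div_iff₀ hr (by linarith)]
    linarith

theorem mul_min_one_inv_sq_le {t : ℝ} (ht : 0 < t) : t * min 1 (t ^ 2)⁻¹ ≤ min 1 t⁻¹ := by
  have hinv : t * min 1 (t ^ 2)⁻¹ ≤ t⁻¹ :=
    (mul_le_mul_of_nonneg_left (min_le_right _ _) ht.le).trans_eq (by field_simp)
  refine le_min ?_ hinv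
  rcases le_total t 1 with h | h
  · exact (mul_le_mul_of_nonneg_left (min_le_left _ _) ht.le).trans (by linarith)
  · exact hinv.trans (inv_le_one_of_one_le₀ h)

theorem min_one_inv_half_le (s : ℝ) : min 1 (s / 2)⁻¹ ≤ 2 * min 1 s⁻¹ := by
  rw [mul_min_of_nonneg _ _ zero_le_two, inv_div, div_eq_mul_inv]
  exact min_le_min (by norm_num) le_rfl

theorem half_rpow_one_sub_le {s α : ℝ} (hs : 0 < s) (hα : α ≤ 2) :
    (s / 2) ^ (1 - α) ≤ 2 * s ^ (1 - α) := by
  rw [Real.div_rpow hs.le zero_le_two, div_eq_mul_inv, ← Real.rpow_neg zero_le_two, neg_sub,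
    mul_comm]
  gcongr
  simpa using Real.rpow_le_rpow_of_exponent_le one_le_two (show α - 1 ≤ 1 by linarith)

theorem mul_min_one_inv_sq_div_rpow_le {α c₂ s : ℝ} (hα1 : 1 < α) (hα2 : α ≤ 2) (hs : 0 < s)
    (hc₂ : 0 ≤ c₂) :
    s * (c₂ * min 1 ((s / 2) ^ 2)⁻¹ / (α * (s / 2) ^ (α - 1))) ≤
      8 * c₂ / α * (s ^ (1 - α) * min 1 s⁻¹) := by
  have ht : 0 < s / 2 := by positivity
  have hα0 : 0 < α := by linarith
  have key : s * (c₂ * min 1 ((s / 2) ^ 2)⁻¹ / (α * (s / 2) ^ (α - 1))) =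
      2 * c₂ / α * ((s / 2) * min 1 ((s / 2) ^ 2)⁻¹) * (s / 2) ^ (1 - α) := by
    rw [show 1 - α = -(α - 1) by ring, Real.rpow_neg ht.le]
    field_simp
  rw [key]
  calc 2 * c₂ / α * ((s / 2) * min 1 ((s / 2) ^ 2)⁻¹) * (s / 2) ^ (1 - α)
      ≤ 2 * c₂ / α * (2 * min 1 s⁻¹) * (2 * s ^ (1 - α)) := by
        gcongr 2 * c₂ / α * ?_ * ?_
        · exact (mul_min_one_inv_sq_le ht).trans (min_one_inv_half_le s)
        · exact half_rpow_one_sub_le hs hα2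
    _ = 8 * c₂ / α * (s ^ (1 - α) * min 1 s⁻¹) := by ring

theorem integrableOn_and_abs_setIntegral_le {X : Type*} [MeasurableSpace X] {μ : Measure X}
    {f g : X → ℝ} {S : Set X} (hS : MeasurableSet S) (hg : IntegrableOn g S μ)
    (hf : AEStronglyMeasurable f (μ.restrict S)) (hfg : ∀ x ∈ S, |f x| ≤ g x) :
    IntegrableOn f S μ ∧ |∫ x in S, f x ∂μ| ≤ ∫ x in S, g x ∂μ :=
  ⟨hg.mono' hf (ae_restrict_of_forall_mem hS hfg),
    Real.norm_eq_abs (∫ x in S, f x ∂μ) ▸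
      norm_integral_le_of_norm_le hg (ae_restrict_of_forall_mem hS hfg)⟩

theorem integral_Ioc_inv_one_add {m : ℝ} (hm : 0 ≤ m) :
    ∫ r in Ioc 0 m, (1 + r)⁻¹ = Real.log (1 + m) := by
  rw [← intervalIntegral.integral_of_le hm, intervalIntegral.integral_comp_add_left (·⁻¹),
    integral_inv_of_pos (by norm_num) (by linarith), add_zero, div_one]

theorem Ioi_diff_Ioo_eq_Ioc_union_Ici {a b : ℝ} (hb : 0 < b) :
    Ioi 0 \ Ioo a b = Ioc 0 a ∪ Ici b := by
  ext x
  simp only [Set.mem_sdiff, mem_Ioi, mem_Ioo, mem_union, mem_Ioc, mem_Ici]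
  constructor
  · rintro ⟨hx, hxab⟩
    by_contra! h
    exact hxab ⟨h.1 hx, h.2⟩
  · rintro (⟨hx, hxa⟩ | hbx) <;> refine ⟨by linarith, fun h => ?_⟩ <;> linarith [h.1, h.2]

section Kernel

variable {α c₁ c₂ s : ℝ} {h h' : ℝ → ℝ}

theorem aestronglyMeasurable_div_rpow_sub {S : Set ℝ} (hh : ContinuousOn h (Ioi 0))
    (hS : MeasurableSet S) (hSpos : S ⊆ Ioi 0) :
    AEStronglyMeasurable (fun r => h r / (r ^ α - s ^ α)) (volume.restrict S) :=
  ((hh.mono hSpos).aemeasurable hS |>.div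
    (by fun_prop : Measurable fun r : ℝ => r ^ α - s ^ α).aemeasurable).aestronglyMeasurable

theorem integrableOn_Ioc_and_abs_setIntegral_le (hα : 1 ≤ α) (hs : 0 < s) (hc₁ : 0 ≤ c₁)
    (hh : ContinuousOn h (Ioi 0)) (hb : ∀ r, 0 < r → |h r| ≤ c₁ * min 1 r⁻¹) :
    IntegrableOn (fun r => h r / (r ^ α - s ^ α)) (Ioc 0 (s - s / 2)) ∧
      |∫ r in Ioc 0 (s - s / 2), h r / (r ^ α - s ^ α)| ≤
        4 * c₁ * (s ^ (-α) * Real.log (1 + s)) := by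
  have hmaj : IntegrableOn (fun r => 4 * c₁ * s ^ (-α) * (1 + r)⁻¹) (Ioc 0 (s - s / 2)) :=
    (ContinuousOn.integrableOn_Icc (continuousOn_const.mul (ContinuousOn.inv₀ (by fun_prop)
      fun r hr => (by linarith [hr.1] : (0 : ℝ) < 1 + r).ne'))).mono_set Ioc_subset_Icc_self
  have hpt : ∀ r ∈ Ioc 0 (s - s / 2),
      |h r / (r ^ α - s ^ α)| ≤ 4 * c₁ * s ^ (-α) * (1 + r)⁻¹ := by
    rintro r ⟨hr, hrs⟩
    have hden : s ^ α / 2 ≤ |r ^ α - s ^ α| := by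
      have := Real.rpow_le_mul_rpow_of_le_mul hr.le hs.le (by norm_num) (by norm_num) hα
        (show r ≤ 1 / 2 * s by linarith)
      rw [abs_sub_comm]
      exact (by linarith : s ^ α / 2 ≤ s ^ α - r ^ α).trans (le_abs_self _)
    have hsα : 0 < s ^ α := Real.rpow_pos_of_pos hs α
    rw [abs_div, div_le_iff₀ (by linarith)]
    calc |h r| ≤ c₁ * min 1 r⁻¹ := hb r hr
      _ ≤ c₁ * (2 * (1 + r)⁻¹) := by gcongr; exact min_one_inv_le_two_mul_inv_one_add hr
      _ = 4 * c₁ * s ^ (-α) * (1 + r)⁻¹ * (s ^ α / 2) := by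
        rw [Real.rpow_neg hs.le]; field_simp; ring
      _ ≤ 4 * c₁ * s ^ (-α) * (1 + r)⁻¹ * |r ^ α - s ^ α| := by gcongr
  obtain ⟨hint, hle⟩ := integrableOn_and_abs_setIntegral_le measurableSet_Ioc hmaj
    (aestronglyMeasurable_div_rpow_sub hh measurableSet_Ioc fun r hr => hr.1) hpt
  refine ⟨hint, hle.trans ?_⟩
  rw [integral_const_mul, integral_Ioc_inv_one_add (by linarith), mul_assoc]
  gcongr <;> linarith

theorem integrableOn_Ici_and_abs_setIntegral_le (hα : 1 < α) (hs : 0 < s) (hc₁ : 0 ≤ c₁)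
    (hh : ContinuousOn h (Ioi 0)) (hb : ∀ r, 0 < r → |h r| ≤ c₁ * min 1 r⁻¹) :
    IntegrableOn (fun r => h r / (r ^ α - s ^ α)) (Ici (s + s / 2)) ∧
      |∫ r in Ici (s + s / 2), h r / (r ^ α - s ^ α)| ≤
        3 * c₁ / (α - 1) * (s ^ (1 - α) * min 1 s⁻¹) := by
  have h0 : 0 < s + s / 2 := by linarith
  have hmaj : IntegrableOn (fun r => 3 * c₁ * min 1 s⁻¹ * r ^ (-α)) (Ici (s + s / 2)) :=
    (integrableOn_Ici_iff_integrableOn_Ioi).2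
      ((integrableOn_Ioi_rpow_of_lt (by linarith) h0).const_mul _)
  have hpt : ∀ r ∈ Ici (s + s / 2),
      |h r / (r ^ α - s ^ α)| ≤ 3 * c₁ * min 1 s⁻¹ * r ^ (-α) := by
    intro r hr
    have hr0 : 0 < r := h0.trans_le hr
    have hrα : 0 < r ^ α := Real.rpow_pos_of_pos hr0 α
    have hden : r ^ α / 3 ≤ |r ^ α - s ^ α| := by
      have := Real.rpow_le_mul_rpow_of_le_mul hs.le hr0.le (by norm_num) (by norm_num) hα.le
        (show s ≤ 2 / 3 * r by linarith [mem_Ici.1 hr])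
      exact (by linarith : r ^ α / 3 ≤ r ^ α - s ^ α).trans (le_abs_self _)
    rw [abs_div, div_le_iff₀ (by linarith)]
    calc |h r| ≤ c₁ * min 1 r⁻¹ := hb r hr0
      _ ≤ c₁ * min 1 s⁻¹ := by gcongr; linarith [mem_Ici.1 hr]
      _ = 3 * c₁ * min 1 s⁻¹ * r ^ (-α) * (r ^ α / 3) := by
        rw [Real.rpow_neg hr0.le]; field_simp
      _ ≤ 3 * c₁ * min 1 s⁻¹ * r ^ (-α) * |r ^ α - s ^ α| := by gcongr
  obtain ⟨hint, hle⟩ := integrableOn_and_abs_setIntegral_le measurableSet_Ici hmaj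
    (aestronglyMeasurable_div_rpow_sub hh measurableSet_Ici fun r hr => h0.trans_le hr) hpt
  refine ⟨hint, hle.trans ?_⟩
  rw [integral_const_mul, integral_Ici_eq_integral_Ioi, integral_Ioi_rpow_of_lt (by linarith) h0,
    show -α + 1 = 1 - α by ring, ← neg_div_neg_eq, neg_neg, neg_sub]
  have : (s + s / 2) ^ (1 - α) ≤ s ^ (1 - α) :=
    Real.rpow_le_rpow_of_nonpos hs (by linarith) (by linarith)
  have hα' : 0 < α - 1 := by linarith
  calc 3 * c₁ * min 1 s⁻¹ * ((s + s / 2) ^ (1 - α) / (α - 1))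
      ≤ 3 * c₁ * min 1 s⁻¹ * (s ^ (1 - α) / (α - 1)) := by gcongr
    _ = 3 * c₁ / (α - 1) * (s ^ (1 - α) * min 1 s⁻¹) := by ring

/-- `A / L + c₁ min(1, 1/s) B / (L α s^(α-1))`, with `A`, `L`, `B` the bounds of `|h'|`, of
`(r^α)'` from below and of `|(r^α)''|` on `[s/2, 3s/2]`. -/
def remainderBound (α c₁ c₂ s : ℝ) : ℝ :=
  c₂ * min 1 ((s / 2) ^ 2)⁻¹ / (α * (s / 2) ^ (α - 1)) +
    c₁ * min 1 s⁻¹ * (α * ((α - 1) * (s / 2) ^ (α - 1 - 1))) /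
      (α * (s / 2) ^ (α - 1) * (α * s ^ (α - 1)))

theorem mul_remainderBound_le (hα1 : 1 < α) (hα2 : α ≤ 2) (hs : 0 < s) (hc₂ : 0 ≤ c₂) :
    s * remainderBound α c₁ c₂ s ≤
      (8 * c₂ / α + 2 * c₁ * (α - 1) / α) * (s ^ (1 - α) * min 1 s⁻¹) := by
  have ht : 0 < s / 2 := by positivity
  have hα0 : 0 < α := by linarith
  have hsB : s * (α * ((α - 1) * (s / 2) ^ (α - 1 - 1)) /
      (α * (s / 2) ^ (α - 1) * (α * s ^ (α - 1)))) = 2 * (α - 1) / α * s ^ (1 - α) := by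
    rw [Real.rpow_sub_one ht.ne', show 1 - α = -(α - 1) by ring, Real.rpow_neg hs.le]
    have : 0 < (s / 2) ^ (α - 1) := by positivity
    have : 0 < s ^ (α - 1) := by positivity
    field_simp
  rw [remainderBound]
  calc _ = s * (c₂ * min 1 ((s / 2) ^ 2)⁻¹ / (α * (s / 2) ^ (α - 1))) + c₁ * min 1 s⁻¹ *
          (s * (α * ((α - 1) * (s / 2) ^ (α - 1 - 1)) /
            (α * (s / 2) ^ (α - 1) * (α * s ^ (α - 1))))) := by ring
    _ ≤ 8 * c₂ / α * (s ^ (1 - α) * min 1 s⁻¹) +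
        c₁ * min 1 s⁻¹ * (2 * (α - 1) / α * s ^ (1 - α)) := by
      rw [hsB]
      exact add_le_add_left (mul_min_one_inv_sq_div_rpow_le hα1 hα2 hs hc₂) _
    _ = (8 * c₂ / α + 2 * c₁ * (α - 1) / α) * (s ^ (1 - α) * min 1 s⁻¹) := by ring

theorem abs_div_rpow_sub_sub_le_remainderBound (hα1 : 1 < α) (hα2 : α < 2) (hs : 0 < s)
    (hc₂ : 0 ≤ c₂) (hderiv : ∀ r, 0 < r → HasDerivAt h (h' r) r)
    (hb : ∀ r, 0 < r → |h r| ≤ c₁ * min 1 r⁻¹)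
    (hb' : ∀ r, 0 < r → |h' r| ≤ c₂ * min 1 (r ^ 2)⁻¹) {r : ℝ}
    (hr : r ∈ Icc (s - s / 2) (s + s / 2)) :
    |h r / (r ^ α - s ^ α) - h s / (α * s ^ (α - 1)) * (r - s)⁻¹| ≤ remainderBound α c₁ c₂ s := by
  have ht : 0 < s / 2 := by positivity
  have hα0 : 0 < α := by linarith
  have hI : ∀ x ∈ Icc (s - s / 2) (s + s / 2), s / 2 ≤ x := fun x hx => by linarith [hx.1]
  have hIpos : ∀ x ∈ Icc (s - s / 2) (s + s / 2), 0 < x := fun x hx => ht.trans_le (hI x hx)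
  have hL : 0 < α * (s / 2) ^ (α - 1) := by positivity
  refine (abs_div_sub_sub_div_mul_inv_le (A := c₂ * min 1 ((s / 2) ^ 2)⁻¹)
    (B := α * ((α - 1) * (s / 2) ^ (α - 1 - 1))) (φ := fun x => x ^ α)
    (φ' := fun x => α * x ^ (α - 1)) (φ'' := fun x => α * ((α - 1) * x ^ (α - 1 - 1)))
    (convex_Icc _ _) hL (fun x hx => hderiv x (hIpos x hx)) (fun x hx => ?_)
    (fun x hx => Real.hasDerivAt_rpow_const (Or.inl (hIpos x hx).ne')) (fun x hx => ?_)
    (fun x hx => (Real.hasDerivAt_rpow_const (Or.inl (hIpos x hx).ne')).const_mul α)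
    (fun x hx => ?_) hr ⟨by linarith, by linarith⟩).trans ?_
  · refine (hb' x (hIpos x hx)).trans ?_
    gcongr
    exact hI x hx
  · exact mul_le_mul_of_nonneg_left (Real.rpow_le_rpow ht.le (hI x hx) (by linarith)) hα0.le
  · have := hIpos x hx
    have : 0 < α - 1 := by linarith
    rw [abs_of_nonneg (by positivity)]
    exact mul_le_mul_of_nonneg_left (mul_le_mul_of_nonneg_left
      (Real.rpow_le_rpow_of_nonpos ht (hI x hx) (by linarith)) this.le) hα0.le
  · rw [remainderBound]
    gcongr
    exact hb s hs

theorem integrableOn_Ioo_and_abs_setIntegral_le (hα1 : 1 < α) (hα2 : α < 2) (hs : 0 < s)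
    (hc₂ : 0 ≤ c₂) (hh : ContinuousOn h (Ioi 0))
    (hderiv : ∀ r, 0 < r → HasDerivAt h (h' r) r)
    (hb : ∀ r, 0 < r → |h r| ≤ c₁ * min 1 r⁻¹)
    (hb' : ∀ r, 0 < r → |h' r| ≤ c₂ * min 1 (r ^ 2)⁻¹) :
    IntegrableOn (fun r => h r / (r ^ α - s ^ α) - h s / (α * s ^ (α - 1)) * (r - s)⁻¹)
        (Ioo (s - s / 2) (s + s / 2)) ∧
      |∫ r in Ioo (s - s / 2) (s + s / 2),
          (h r / (r ^ α - s ^ α) - h s / (α * s ^ (α - 1)) * (r - s)⁻¹)| ≤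
        (8 * c₂ / α + 2 * c₁ * (α - 1) / α) * (s ^ (1 - α) * min 1 s⁻¹) := by
  obtain ⟨hint, hle⟩ := integrableOn_and_abs_setIntegral_le measurableSet_Ioo
    (integrableOn_const measure_Ioo_lt_top.ne)
    ((aestronglyMeasurable_div_rpow_sub hh measurableSet_Ioo fun x hx => mem_Ioi.2 (by
      linarith [hx.1])).sub (by fun_prop : Measurable fun r : ℝ =>
        h s / (α * s ^ (α - 1)) * (r - s)⁻¹).aestronglyMeasurable)
    fun r hr => abs_div_rpow_sub_sub_le_remainderBound hα1 hα2 hs hc₂ hderiv hb hb'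
      (Ioo_subset_Icc_self hr)
  refine ⟨hint, hle.trans ?_⟩
  rw [setIntegral_const, Real.volume_real_Ioo_of_le (by linarith), smul_eq_mul,
    show s + s / 2 - (s - s / 2) = s by ring]
  exact mul_remainderBound_le hα1 hα2.le hs hc₂

/-- The principal value of `∫₀^∞ h r / (r ^ α - s ^ α) dr`, written with absolutely convergent
integrals: on `(s/2, 3s/2)` the singular part `h s / (α s ^ (α - 1) (r - s))` is removed, since its
integrals over sets symmetric about `s` vanish. -/
def pvIntegral (α : ℝ) (h : ℝ → ℝ) (s : ℝ) : ℝ :=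
  (∫ r in Ioi 0 \ Ioo (s - s / 2) (s + s / 2), h r / (r ^ α - s ^ α)) +
    ∫ r in Ioo (s - s / 2) (s + s / 2),
      (h r / (r ^ α - s ^ α) - h s / (α * s ^ (α - 1)) * (r - s)⁻¹)

theorem tendsto_pvIntegral_and_abs_le (hα1 : 1 < α) (hα2 : α < 2) (hs : 0 < s)
    (hc₁ : 0 ≤ c₁) (hc₂ : 0 ≤ c₂) (hderiv : ∀ r, 0 < r → HasDerivAt h (h' r) r)
    (hb : ∀ r, 0 < r → |h r| ≤ c₁ * min 1 r⁻¹)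
    (hb' : ∀ r, 0 < r → |h' r| ≤ c₂ * min 1 (r ^ 2)⁻¹) :
    Tendsto (fun ε => ∫ r in Ioi 0 \ Ioo (s - ε) (s + ε), h r / (r ^ α - s ^ α)) (𝓝[>] 0)
        (𝓝 (pvIntegral α h s)) ∧
      |pvIntegral α h s| ≤ 4 * c₁ * (s ^ (-α) * Real.log (1 + s)) +
        (3 * c₁ / (α - 1) + (8 * c₂ / α + 2 * c₁ * (α - 1) / α)) * (s ^ (1 - α) * min 1 s⁻¹) := by
  have hh : ContinuousOn h (Ioi 0) := fun r hr => (hderiv r hr).continuousAt.continuousWithinAt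
  obtain ⟨hint₁, hle₁⟩ := integrableOn_Ioc_and_abs_setIntegral_le hα1.le hs hc₁ hh hb
  obtain ⟨hint₂, hle₂⟩ := integrableOn_Ici_and_abs_setIntegral_le hα1 hs hc₁ hh hb
  obtain ⟨hint₃, hle₃⟩ := integrableOn_Ioo_and_abs_setIntegral_le hα1 hα2 hs hc₂ hh hderiv hb hb'
  have hsplit : Ioi 0 \ Ioo (s - s / 2) (s + s / 2) = Ioc 0 (s - s / 2) ∪ Ici (s + s / 2) :=
    Ioi_diff_Ioo_eq_Ioc_union_Ici (by linarith)
  have hdisj : Disjoint (Ioc 0 (s - s / 2)) (Ici (s + s / 2)) :=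
    Set.disjoint_left.2 fun x hx hx' => by linarith [hx.2, mem_Ici.1 hx']
  refine ⟨tendsto_setIntegral_diff_Ioo (by linarith) (fun x hx => mem_Ioi.2 (by linarith [hx.1]))
    (hsplit ▸ hint₁.union hint₂) hint₃, ?_⟩
  rw [pvIntegral, hsplit, setIntegral_union hdisj measurableSet_Ici hint₁ hint₂]
  calc _ ≤ |∫ r in Ioc 0 (s - s / 2), h r / (r ^ α - s ^ α)| +
        |∫ r in Ici (s + s / 2), h r / (r ^ α - s ^ α)| +
        |∫ r in Ioo (s - s / 2) (s + s / 2),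
          (h r / (r ^ α - s ^ α) - h s / (α * s ^ (α - 1)) * (r - s)⁻¹)| :=
        (abs_add_le _ _).trans (add_le_add_left (abs_add_le _ _) _)
    _ ≤ _ := by linarith

end Kernel

theorem abs_le_of_le_log_add_rpow_mul_min {α s K C₁ C₂ : ℝ} (hs : 0 < s) (hC₁ : 0 ≤ C₁)
    (hC₂ : 0 ≤ C₂)
    (hK : |K| ≤ C₁ * (s ^ (-α) * Real.log (1 + s)) + C₂ * (s ^ (1 - α) * min 1 s⁻¹)) :
    (s < 1 → |K| ≤ (C₁ + C₂) / Real.log 2 * s ^ (1 - α)) ∧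
      (1 ≤ s → |K| ≤ (C₁ + C₂) / Real.log 2 * s ^ (-α) * Real.log (1 + s)) := by
  have hlog2 : 0 < Real.log 2 := Real.log_pos one_lt_two
  have hlog2' : Real.log 2 < 1 := Real.log_two_lt_d9.trans (by norm_num)
  have hpow : s ^ (1 - α) = s ^ (-α) * s := by
    rw [sub_eq_neg_add, Real.rpow_add hs, Real.rpow_one, mul_comm]
  have hsα : 0 < s ^ (-α) := Real.rpow_pos_of_pos hs _
  constructor
  · intro hs1
    have hE : s ^ (-α) * Real.log (1 + s) ≤ s ^ (1 - α) := by
      rw [hpow]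
      gcongr
      linarith [Real.log_le_sub_one_of_pos (show 0 < 1 + s by linarith)]
    rw [min_eq_left (one_le_inv₀ hs |>.2 hs1.le), mul_one] at hK
    rw [div_mul_eq_mul_div, le_div_iff₀ hlog2]
    nlinarith [abs_nonneg K, mul_le_mul_of_nonneg_left hE hC₁]
  · intro hs1
    have hρ : Real.log 2 * (s ^ (1 - α) * min 1 s⁻¹) ≤ s ^ (-α) * Real.log (1 + s) := by
      calc Real.log 2 * (s ^ (1 - α) * min 1 s⁻¹) ≤ Real.log (1 + s) * (s ^ (-α) * s * s⁻¹) := by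
            rw [← hpow]
            exact mul_le_mul (Real.log_le_log two_pos (by linarith))
              (mul_le_mul_of_nonneg_left (min_le_right _ _) (by positivity)) (by positivity)
              (Real.log_nonneg (by linarith))
        _ = s ^ (-α) * Real.log (1 + s) := by field_simp
    have hE : 0 ≤ s ^ (-α) * Real.log (1 + s) :=
      mul_nonneg hsα.le (Real.log_nonneg (by linarith))
    rw [mul_assoc, div_mul_eq_mul_div, le_div_iff₀ hlog2]
    nlinarith [abs_nonneg K, mul_le_mul_of_nonneg_left hρ hC₂, mul_nonneg hC₁ hE]

theorem stmt6_general (α : ℝ) (hα1 : 1 < α) (hα2 : α < 2) (c₁ c₂ : ℝ)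
    (h h' : ℝ → ℝ)
    (hderiv : ∀ r : ℝ, 0 < r → HasDerivAt h (h' r) r)
    (hb : ∀ r : ℝ, 0 < r → |h r| ≤ c₁ * min 1 r⁻¹)
    (hb' : ∀ r : ℝ, 0 < r → |h' r| ≤ c₂ * min 1 (r ^ 2)⁻¹) :
    ∃ K : ℝ → ℝ,
      (∀ s : ℝ, 0 < s →
        Tendsto (fun ε : ℝ =>
            ∫ r in Set.Ioi (0 : ℝ) \ Set.Ioo (s - ε) (s + ε), h r / (r ^ α - s ^ α))
          (nhdsWithin 0 (Set.Ioi 0)) (nhds (K s))) ∧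
      ∃ C : ℝ, ∀ s : ℝ, 0 < s →
        (s < 1 → |K s| ≤ C * s ^ (1 - α)) ∧
        (1 ≤ s → |K s| ≤ C * s ^ (-α) * Real.log (1 + s)) := by
  have hc₁ : 0 ≤ c₁ := by simpa using (abs_nonneg _).trans (hb 1 one_pos)
  have hc₂ : 0 ≤ c₂ := by simpa using (abs_nonneg _).trans (hb' 1 one_pos)
  have hα0 : 0 < α := by linarith
  have hα1' : 0 < α - 1 := by linarith
  have hC : 0 ≤ 3 * c₁ / (α - 1) + (8 * c₂ / α + 2 * c₁ * (α - 1) / α) := by positivity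
  refine ⟨pvIntegral α h,
    fun s hs => (tendsto_pvIntegral_and_abs_le hα1 hα2 hs hc₁ hc₂ hderiv hb hb').1, _,
    fun s hs => abs_le_of_le_log_add_rpow_mul_min hs (by positivity) hC
      (tendsto_pvIntegral_and_abs_le hα1 hα2 hs hc₁ hc₂ hderiv hb hb').2⟩

theorem stmt6 (α : ℝ) (hα1 : 1 < α) (hα2 : α < 2) (c₁ c₂ : ℝ)
    (h h' : ℝ → ℝ)
    (hderiv : ∀ r : ℝ, 0 < r → HasDerivAt h (h' r) r)
    (hcont : ContinuousOn h' (Set.Ioi 0))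
    (hb : ∀ r : ℝ, 0 < r → |h r| ≤ c₁ * min 1 r⁻¹)
    (hb' : ∀ r : ℝ, 0 < r → |h' r| ≤ c₂ * min 1 (r ^ 2)⁻¹) :
    ∃ K : ℝ → ℝ,
      (∀ s : ℝ, 0 < s →
        Tendsto (fun ε : ℝ =>
            ∫ r in Set.Ioi (0 : ℝ) \ Set.Ioo (s - ε) (s + ε), h r / (r ^ α - s ^ α))
          (nhdsWithin 0 (Set.Ioi 0)) (nhds (K s))) ∧
      ∃ C : ℝ, ∀ s : ℝ, 0 < s →
        (s < 1 → |K s| ≤ C * s ^ (1 - α)) ∧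
        (1 ≤ s → |K s| ≤ C * s ^ (-α) * Real.log (1 + s)) :=
  stmt6_general α hα1 hα2 c₁ c₂ h h' hderiv hb hb'
end
end

section
/- Let α ∈ (1,2) and let h : (0,∞) → ℝ be continuously differentiable with |h(r)| ≤ c₁ min{1, r^{−1}} and |h'(r)| ≤ c₂ min{1, r^{−2}} for all r > 0. Then for every s > 0, lim_{ε→0⁺} (1/π) ∫_0^∞ h(r)/(r^α − s^α + iε) dr = K(s) − i h(s)/(α s^{α−1}), where K(s) = (1/π) p.v.∫_0^∞ h(r)/(r^α − s^α) dr. -/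
open MeasureTheory Filter

noncomputable section

/-
Write `φ r = r ^ α - s ^ α`, so that `φ s = 0` and `φ' s = α s ^ (α - 1) ≠ 0`, and put
`c = h s / φ' s`. On an interval `(a, b) ∋ s`, subtract the singular part `c φ' / φ` from `h / φ`:
the remainder `(h - c φ') / φ` has a removable singularity at `s`, hence is integrable, and both its
principal value and its `ε`-regularised integral converge to its integral (for the latter by
dominated convergence, since `|φ / (φ + iε)| ≤ 1`). The singular part has the explicit primitives
`c log |φ|` and `c log (φ + iε)`. In the principal value the two boundary terms at `s ∓ ε` cancel in
the limit because `φ` has nonzero derivative at `s`; in the regularised integral `φ a + iε`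
approaches the negative real axis from above, and the branch cut of the logarithm contributes
the extra `-iπ c`.
-/

open Set Topology Complex
open scoped Real

theorem Set.Ioo_sdiff_Ioo_eq_Ioc_union_Ico {α : Type*} [LinearOrder α] {a b c d : α}
    (had : a < d) (hcb : c < b) : Ioo a b \ Ioo c d = Ioc a c ∪ Ico d b := by
  ext x
  simp only [Set.mem_sdiff, mem_Ioo, mem_union, mem_Ioc, mem_Ico, not_and_or, not_lt]
  grind

theorem Set.Ioi_sdiff_Ioo_eq_Ioc_union_Ici {α : Type*} [LinearOrder α] {a c d : α}
    (had : a < d) : Ioi a \ Ioo c d = Ioc a c ∪ Ici d := by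
  ext x
  simp only [Set.mem_sdiff, mem_Ioi, mem_Ioo, mem_union, mem_Ioc, mem_Ici, not_and_or, not_lt]
  grind

theorem tendsto_setIntegral_diff_Ioo_s8 {E : Type*} [NormedAddCommGroup E] [NormedSpace ℝ E]
    {f : ℝ → E} {A : Set ℝ} (hf : IntegrableOn f A) (s : ℝ) :
    Tendsto (fun ε => ∫ x in A \ Ioo (s - ε) (s + ε), f x) (𝓝 0) (𝓝 (∫ x in A, f x)) := by
  have hind : ∀ ε, ∫ x in A \ Ioo (s - ε) (s + ε), f x
      = ∫ x in A, (Ioo (s - ε) (s + ε))ᶜ.indicator f x := fun ε => by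
    rw [setIntegral_indicator measurableSet_Ioo.compl, sdiff_eq]
  simp_rw [hind]
  refine tendsto_integral_filter_of_dominated_convergence (fun x => ‖f x‖)
    (Eventually.of_forall fun ε => hf.aestronglyMeasurable.indicator measurableSet_Ioo.compl)
    (Eventually.of_forall fun ε => ae_of_all _ fun x => norm_indicator_le_norm_self _ _)
    hf.norm ?_
  filter_upwards [Measure.ae_ne _ s] with x hx
  refine tendsto_const_nhds.congr' ?_
  filter_upwards [Iio_mem_nhds (abs_sub_pos.2 hx)] with ε hε
  have hxε : x ∉ Ioo (s - ε) (s + ε) := fun hmem => lt_asymm (mem_Iio.1 hε)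
    (abs_sub_lt_iff.2 ⟨by linarith [hmem.2], by linarith [hmem.1]⟩)
  exact (indicator_of_mem (mem_compl hxε) f).symm

theorem integrableOn_Icc_div_of_hasDerivAt {f φ : ℝ → ℝ} {a b s f' φ' : ℝ}
    (hf : ContinuousOn f (Icc a b)) (hφ : ContinuousOn φ (Icc a b))
    (hfs : HasDerivAt f f' s) (hφs : HasDerivAt φ φ' s) (hf0 : f s = 0) (hφ0 : φ s = 0)
    (hφ' : φ' ≠ 0) (hne : ∀ x ∈ Icc a b, x ≠ s → φ x ≠ 0) :
    IntegrableOn (fun x => f x / φ x) (Icc a b) := by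
  have hlim : Tendsto (fun x => f x / φ x) (𝓝[≠] s) (𝓝 (f' / φ')) := by
    refine (hfs.tendsto_slope.div hφs.tendsto_slope hφ').congr' ?_
    filter_upwards [self_mem_nhdsWithin] with x hx
    have hx : x - s ≠ 0 := sub_ne_zero.2 hx
    simp only [Pi.div_apply, slope_def_field, hf0, hφ0, sub_zero]
    exact div_div_div_cancel_right₀ hx _ _
  have hcont : ContinuousOn (Function.update (fun x => f x / φ x) s (f' / φ')) (Icc a b) := by
    intro x hx
    by_cases hxs : x = s
    · subst hxs
      exact (continuousAt_update_same.2 hlim).continuousWithinAt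
    · exact (continuousWithinAt_update_of_ne hxs).2 ((hf x hx).div (hφ x hx) (hne x hx hxs))
  refine (hcont.integrableOn_compact isCompact_Icc).congr_fun_ae ?_
  filter_upwards [Measure.ae_ne _ s] with x hx
  exact Function.update_of_ne hx _ _

theorem ofReal_add_mul_I_mem_slitPlane (x : ℝ) {ε : ℝ} (hε : ε ≠ 0) :
    (x : ℂ) + ε * I ∈ slitPlane :=
  mem_slitPlane_iff.2 (Or.inr (by simpa using hε))

theorem tendsto_ofReal_add_mul_I (x : ℝ) :
    Tendsto (fun ε : ℝ => (x : ℂ) + ε * I) (𝓝 0) (𝓝 x) := by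
  simpa using ((continuous_ofReal.mul continuous_const).tendsto (0 : ℝ)).const_add (x : ℂ)

theorem norm_div_add_mul_I_le (x ε : ℝ) : ‖(x : ℂ) / (x + ε * I)‖ ≤ 1 := by
  rw [norm_div]
  refine div_le_one_of_le₀ ?_ (norm_nonneg _)
  calc ‖(x : ℂ)‖ = |((x : ℂ) + ε * I).re| := by simp
    _ ≤ _ := abs_re_le_norm _

theorem MeasureTheory.Integrable.mul_div_add_mul_I {X : Type*} [MeasurableSpace X] {μ : Measure X}
    {G : X → ℂ} {φ : X → ℝ} (hG : Integrable G μ) (hφ : AEStronglyMeasurable φ μ) (ε : ℝ) :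
    Integrable (fun x => G x * (φ x / (φ x + ε * I))) μ :=
  hG.mul_bdd ((by fun_prop : Measurable fun t : ℝ => (t : ℂ) / (t + ε * I)).comp_aemeasurable
    hφ.aemeasurable).aestronglyMeasurable (Eventually.of_forall fun x => norm_div_add_mul_I_le _ _)

theorem tendsto_integral_mul_div_add_mul_I {X : Type*} [MeasurableSpace X] {μ : Measure X}
    {G : X → ℂ} {φ : X → ℝ} (hG : Integrable G μ) (hφ : AEStronglyMeasurable φ μ)
    (hφ0 : ∀ᵐ x ∂μ, φ x ≠ 0) :
    Tendsto (fun ε : ℝ => ∫ x, G x * (φ x / (φ x + ε * I)) ∂μ) (𝓝 0) (𝓝 (∫ x, G x ∂μ)) := by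
  refine tendsto_integral_filter_of_dominated_convergence (fun x => ‖G x‖)
    (Eventually.of_forall fun ε => (hG.mul_div_add_mul_I hφ ε).aestronglyMeasurable)
    (Eventually.of_forall fun ε => ae_of_all _ fun x => ?_) hG.norm ?_
  · rw [norm_mul]
    exact mul_le_of_le_one_right (norm_nonneg _) (norm_div_add_mul_I_le _ _)
  · filter_upwards [hφ0] with x hx
    simpa [div_self (ofReal_ne_zero.2 hx)] using
      (tendsto_const_nhds (x := G x)).mul
        ((tendsto_const_nhds (x := (φ x : ℂ))).div (tendsto_ofReal_add_mul_I _)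
          (ofReal_ne_zero.2 hx))

theorem tendsto_log_sub_log_of_hasDerivAt {φ : ℝ → ℝ} {s d : ℝ} (hφ : HasDerivAt φ d s)
    (hφs : φ s = 0) (hd : d ≠ 0) :
    Tendsto (fun t => Real.log (φ (s - t)) - Real.log (φ (s + t))) (𝓝[≠] 0) (𝓝 0) := by
  have hsub : Tendsto (fun t : ℝ => s - t) (𝓝[≠] 0) (𝓝[≠] s) := by
    have hmap := map_subLeft_nhdsNE (c := s) (a := (0 : ℝ))
    rw [sub_zero] at hmap
    exact hmap.le
  have hadd : Tendsto (fun t : ℝ => s + t) (𝓝[≠] 0) (𝓝[≠] s) := by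
    have hmap := map_add_left_nhdsNE (c := s) (a := (0 : ℝ))
    rw [add_zero] at hmap
    exact hmap.le
  have hleft : Tendsto (fun t => (-t)⁻¹ * φ (s - t)) (𝓝[≠] 0) (𝓝 d) := by
    simpa [Function.comp_def, slope_def_field, hφs, div_eq_inv_mul] using
      hφ.tendsto_slope.comp hsub
  have hright : Tendsto (fun t => t⁻¹ * φ (s + t)) (𝓝[≠] 0) (𝓝 d) := by
    simpa [Function.comp_def, slope_def_field, hφs, div_eq_inv_mul] using
      hφ.tendsto_slope.comp hadd
  have hlog := ((Real.continuousAt_log hd).tendsto.comp hleft).sub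
    ((Real.continuousAt_log hd).tendsto.comp hright)
  rw [sub_self] at hlog
  refine hlog.congr' ?_
  filter_upwards [self_mem_nhdsWithin, hleft.eventually_ne hd, hright.eventually_ne hd]
    with t ht hlt hrt
  rw [Function.comp_apply, Function.comp_apply, Real.log_mul (left_ne_zero_of_mul hlt)
    (right_ne_zero_of_mul hlt), Real.log_mul (left_ne_zero_of_mul hrt)
    (right_ne_zero_of_mul hrt), Real.log_inv, Real.log_inv, Real.log_neg_eq_log]
  ring

theorem setIntegral_Ioc_deriv_div_eq_log_sub_log {φ φ' : ℝ → ℝ} {a b : ℝ} (hab : a ≤ b)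
    (hφ : ∀ x ∈ Icc a b, HasDerivAt φ (φ' x) x) (hφ' : ContinuousOn φ' (Icc a b))
    (hne : ∀ x ∈ Icc a b, φ x ≠ 0) :
    ∫ x in Ioc a b, φ' x / φ x = Real.log (φ b) - Real.log (φ a) := by
  rw [← intervalIntegral.integral_of_le hab]
  rw [← uIcc_of_le hab] at hφ hφ' hne
  exact intervalIntegral.integral_eq_sub_of_hasDerivAt (fun x hx => (hφ x hx).log (hne x hx))
    (hφ'.div (fun x hx => (hφ x hx).continuousAt.continuousWithinAt) hne).intervalIntegrable

theorem integrableOn_deriv_div_Icc_diff_Ioo {φ φ' : ℝ → ℝ} {a b s ε : ℝ}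
    (hφ : ∀ x ∈ Icc a b, HasDerivAt φ (φ' x) x) (hφ' : ContinuousOn φ' (Icc a b))
    (hne : ∀ x ∈ Icc a b, x ≠ s → φ x ≠ 0) (hε : 0 < ε) :
    IntegrableOn (fun x => φ' x / φ x) (Icc a b \ Ioo (s - ε) (s + ε)) :=
  ((hφ'.mono sdiff_subset).div (fun x hx => (hφ x hx.1).continuousAt.continuousWithinAt)
    fun x hx => hne x hx.1 fun h => hx.2 (h ▸ ⟨by linarith, by linarith⟩)).integrableOn_compact
      (isCompact_Icc.diff isOpen_Ioo)

-- `Real.log` is even, so the limit is `log |φ b| - log |φ a|`.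
theorem tendsto_setIntegral_deriv_div_diff_Ioo {φ φ' : ℝ → ℝ} {a b s : ℝ} (has : a < s)
    (hsb : s < b) (hφ : ∀ x ∈ Icc a b, HasDerivAt φ (φ' x) x)
    (hφ' : ContinuousOn φ' (Icc a b)) (hφs : φ s = 0) (hφ's : φ' s ≠ 0)
    (hne : ∀ x ∈ Icc a b, x ≠ s → φ x ≠ 0) :
    Tendsto (fun ε => ∫ x in Ioo a b \ Ioo (s - ε) (s + ε), φ' x / φ x) (𝓝[>] 0)
      (𝓝 (Real.log (φ b) - Real.log (φ a))) := by
  have hlog := (tendsto_log_sub_log_of_hasDerivAt (hφ s ⟨has.le, hsb.le⟩) hφs hφ's).mono_left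
    (nhdsGT_le_nhdsNE 0)
  rw [← add_zero (Real.log (φ b) - Real.log (φ a))]
  refine (hlog.const_add _).congr' ?_
  filter_upwards [Ioo_mem_nhdsGT (lt_min (sub_pos.2 has) (sub_pos.2 hsb))] with ε ⟨hε, hεm⟩
  have hεa : a < s - ε := by linarith [hεm.trans_le (min_le_left _ _)]
  have hεb : s + ε < b := by linarith [hεm.trans_le (min_le_right _ _)]
  have hpiece : ∀ {c d}, c ≤ d → Icc c d ⊆ Icc a b → s ∉ Icc c d →
      ∫ x in Ioc c d, φ' x / φ x = Real.log (φ d) - Real.log (φ c) := fun hcd hsub hs =>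
    setIntegral_Ioc_deriv_div_eq_log_sub_log hcd (fun x hx => hφ x (hsub hx)) (hφ'.mono hsub)
      fun x hx => hne x (hsub hx) (ne_of_mem_of_not_mem hx hs)
  have hint := integrableOn_deriv_div_Icc_diff_Ioo hφ hφ' hne hε
  have hl := hpiece hεa.le (Icc_subset_Icc_right (by linarith)) fun h => by linarith [h.2]
  have hr := hpiece hεb.le (Icc_subset_Icc_left (by linarith)) fun h => by linarith [h.1]
  rw [Ioo_sdiff_Ioo_eq_Ioc_union_Ico (by linarith) (by linarith),
    setIntegral_union (Set.disjoint_left.2 fun x h1 h2 => by linarith [h1.2, h2.1])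
    measurableSet_Ico, integral_Ico_eq_integral_Ioo, ← integral_Ioc_eq_integral_Ioo, hl, hr]
  · ring
  · exact hint.mono_set fun x hx =>
      ⟨⟨hx.1.le, by linarith [hx.2]⟩, fun h => by linarith [hx.2, h.1]⟩
  · exact hint.mono_set fun x hx =>
      ⟨⟨by linarith [hx.1], hx.2.le⟩, fun h => by linarith [hx.1, h.2]⟩

theorem continuousOn_deriv_div_add_mul_I {φ φ' : ℝ → ℝ} {S : Set ℝ} {ε : ℝ}
    (hφ : ∀ x ∈ S, HasDerivAt φ (φ' x) x) (hφ' : ContinuousOn φ' S) (hε : ε ≠ 0) :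
    ContinuousOn (fun x => (φ' x : ℂ) / (φ x + ε * I)) S :=
  (continuous_ofReal.comp_continuousOn hφ').div
    ((continuous_ofReal.comp_continuousOn
      fun x hx => (hφ x hx).continuousAt.continuousWithinAt).add continuousOn_const)
    fun _ _ => slitPlane_ne_zero (ofReal_add_mul_I_mem_slitPlane _ hε)

theorem integral_deriv_div_add_mul_I {φ φ' : ℝ → ℝ} {a b ε : ℝ}
    (hφ : ∀ x ∈ uIcc a b, HasDerivAt φ (φ' x) x) (hφ' : ContinuousOn φ' (uIcc a b))
    (hε : ε ≠ 0) :
    ∫ x in a..b, (φ' x : ℂ) / (φ x + ε * I) = log (φ b + ε * I) - log (φ a + ε * I) :=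
  intervalIntegral.integral_eq_sub_of_hasDerivAt (fun x hx =>
    ((hφ x hx).ofReal_comp.add_const _).clog_real (ofReal_add_mul_I_mem_slitPlane _ hε))
    (continuousOn_deriv_div_add_mul_I hφ hφ' hε).intervalIntegrable

theorem tendsto_intervalIntegral_deriv_div_add_mul_I {φ φ' : ℝ → ℝ} {a b : ℝ}
    (hφ : ∀ x ∈ uIcc a b, HasDerivAt φ (φ' x) x) (hφ' : ContinuousOn φ' (uIcc a b))
    (ha : φ a < 0) (hb : 0 < φ b) :
    Tendsto (fun ε : ℝ => ∫ x in a..b, (φ' x : ℂ) / (φ x + ε * I)) (𝓝[>] 0)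
      (𝓝 (Real.log (φ b) - Real.log (φ a) - π * I)) := by
  have hright : Tendsto (fun ε : ℝ => log (φ b + ε * I)) (𝓝[>] 0) (𝓝 (Real.log (φ b))) := by
    rw [ofReal_log hb.le]
    exact ((continuousAt_clog (ofReal_mem_slitPlane.2 hb)).tendsto.comp
      (tendsto_ofReal_add_mul_I _)).mono_left nhdsWithin_le_nhds
  have hleft : Tendsto (fun ε : ℝ => log (φ a + ε * I)) (𝓝[>] 0)
      (𝓝 (Real.log (φ a) + π * I)) := by
    have hlim := tendsto_log_nhdsWithin_im_nonneg_of_re_neg_of_im_zero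
      (z := φ a) (by simpa using ha) (by simp)
    rw [norm_real, Real.norm_eq_abs, Real.log_abs] at hlim
    refine hlim.comp (tendsto_nhdsWithin_iff.2 ⟨(tendsto_ofReal_add_mul_I _).mono_left
      nhdsWithin_le_nhds, ?_⟩)
    filter_upwards [self_mem_nhdsWithin] with ε hε
    simpa using le_of_lt hε
  rw [show (Real.log (φ b) : ℂ) - Real.log (φ a) - π * I
    = Real.log (φ b) - (Real.log (φ a) + π * I) by ring]
  refine (hright.sub hleft).congr' ?_
  filter_upwards [self_mem_nhdsWithin] with ε hε
  exact (integral_deriv_div_add_mul_I hφ hφ' (ne_of_gt hε)).symm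

noncomputable def regularPart (h φ φ' : ℝ → ℝ) (a b s x : ℝ) : ℝ :=
  (h x - h s / φ' s * (Ioo a b).indicator φ' x) / φ x

section Plemelj

variable {U : Set ℝ} {h φ φ' : ℝ → ℝ} {a b s : ℝ}

theorem integrableOn_regularPart (hU : MeasurableSet U) (habU : Icc a b ⊆ U) (has : a < s)
    (hsb : s < b)
    (hφ : ∀ x ∈ Icc a b, HasDerivAt φ (φ' x) x) (hφ' : ContinuousOn φ' (Icc a b))
    (hφ'd : DifferentiableAt ℝ φ' s) (hφs : φ s = 0) (hφ's : φ' s ≠ 0)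
    (hne : ∀ x ∈ U, x ≠ s → φ x ≠ 0) (hh : ContinuousOn h (Icc a b))
    (hhd : DifferentiableAt ℝ h s) (hout : IntegrableOn (fun x => h x / φ x) (U \ Ioo a b)) :
    IntegrableOn (regularPart h φ φ' a b s) U := by
  have hinner : IntegrableOn (fun x => (h x - h s / φ' s * φ' x) / φ x) (Icc a b) :=
    integrableOn_Icc_div_of_hasDerivAt (hh.sub (continuousOn_const.mul hφ'))
      (fun x hx => (hφ x hx).continuousAt.continuousWithinAt)
      (hhd.sub (hφ'd.const_mul _)).hasDerivAt (hφ s ⟨has.le, hsb.le⟩) (by field_simp; ring) hφs hφ's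
      fun x hx => hne x (habU hx)
  rw [← sdiff_union_of_subset (Ioo_subset_Icc_self.trans habU)]
  refine IntegrableOn.union (hout.congr_fun (fun x hx => ?_) (hU.diff measurableSet_Ioo))
    ((hinner.mono_set Ioo_subset_Icc_self).congr_fun (fun x hx => ?_) measurableSet_Ioo)
  · simp [regularPart, indicator_of_notMem hx.2]
  · simp [regularPart, indicator_of_mem hx]

theorem tendsto_setIntegral_div_diff_Ioo (habU : Icc a b ⊆ U) (has : a < s) (hsb : s < b)
    (hφ : ∀ x ∈ Icc a b, HasDerivAt φ (φ' x) x) (hφ' : ContinuousOn φ' (Icc a b))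
    (hφs : φ s = 0) (hφ's : φ' s ≠ 0) (hne : ∀ x ∈ U, x ≠ s → φ x ≠ 0)
    (hG : IntegrableOn (regularPart h φ φ' a b s) U) :
    Tendsto (fun ε => ∫ x in U \ Ioo (s - ε) (s + ε), h x / φ x) (𝓝[>] 0)
      (𝓝 ((∫ x in U, regularPart h φ φ' a b s x)
        + h s / φ' s * (Real.log (φ b) - Real.log (φ a)))) := by
  have hsplit : ∀ x, h x / φ x = regularPart h φ φ' a b s x
      + h s / φ' s * (Ioo a b).indicator (fun x => φ' x / φ x) x := fun x => by
    by_cases hx : x ∈ Ioo a b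
    · simp [regularPart, hx]; ring
    · simp [regularPart, hx]
  refine (((tendsto_setIntegral_diff_Ioo_s8 hG s).mono_left nhdsWithin_le_nhds).add
    ((tendsto_setIntegral_deriv_div_diff_Ioo has hsb hφ hφ' hφs hφ's
      fun x hx => hne x (habU hx)).const_mul _)).congr' ?_
  filter_upwards [self_mem_nhdsWithin] with ε hε
  have hset : (U \ Ioo (s - ε) (s + ε)) ∩ Ioo a b = Ioo a b \ Ioo (s - ε) (s + ε) := by
    ext x
    simp only [mem_inter_iff, Set.mem_sdiff]
    exact ⟨fun ⟨⟨_, hx⟩, hab⟩ => ⟨hab, hx⟩,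
      fun ⟨hab, hx⟩ => ⟨⟨habU (Ioo_subset_Icc_self hab), hx⟩, hab⟩⟩
  have hint : IntegrableOn (fun x => φ' x / φ x) (Ioo a b \ Ioo (s - ε) (s + ε)) :=
    (integrableOn_deriv_div_Icc_diff_Ioo hφ hφ' (fun x hx => hne x (habU hx)) hε).mono_set
      (sdiff_subset_sdiff_left Ioo_subset_Icc_self)
  have hind : IntegrableOn ((Ioo a b).indicator fun x => φ' x / φ x) (U \ Ioo (s - ε) (s + ε)) :=
    (integrableOn_indicator_iff measurableSet_Ioo).2 (by rwa [inter_comm, hset])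
  simp_rw [hsplit]
  rw [integral_add (hG.mono_set sdiff_subset) (hind.const_mul _), integral_const_mul,
    setIntegral_indicator measurableSet_Ioo, hset]

theorem tendsto_setIntegral_div_add_mul_I (hU : MeasurableSet U) (habU : Icc a b ⊆ U)
    (hab : a ≤ b) (hφ : ∀ x ∈ Icc a b, HasDerivAt φ (φ' x) x)
    (hφ' : ContinuousOn φ' (Icc a b)) (hφU : ContinuousOn φ U)
    (hne : ∀ x ∈ U, x ≠ s → φ x ≠ 0) (ha : φ a < 0) (hb : 0 < φ b)
    (hG : IntegrableOn (regularPart h φ φ' a b s) U) :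
    Tendsto (fun ε : ℝ => ∫ x in U, (h x : ℂ) / (φ x + ε * I)) (𝓝[>] 0)
      (𝓝 ((∫ x in U, regularPart h φ φ' a b s x : ℝ)
        + h s / φ' s * (Real.log (φ b) - Real.log (φ a) - π * I))) := by
  have hφm : AEStronglyMeasurable φ (volume.restrict U) := hφU.aestronglyMeasurable hU
  have hreg := tendsto_integral_mul_div_add_mul_I hG.ofReal hφm (by
    filter_upwards [ae_restrict_mem hU, Measure.ae_ne _ s] with x hx hxs using hne x hx hxs)
  rw [integral_ofReal] at hreg
  rw [← uIcc_of_le hab] at hφ hφ'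
  refine ((hreg.mono_left nhdsWithin_le_nhds).add
    ((tendsto_intervalIntegral_deriv_div_add_mul_I hφ hφ' ha hb).const_mul _)).congr' ?_
  filter_upwards [self_mem_nhdsWithin] with ε hε
  have hcont := continuousOn_deriv_div_add_mul_I hφ hφ' (ne_of_gt hε)
  rw [uIcc_of_le hab] at hcont
  have hind : IntegrableOn ((Ioo a b).indicator fun x => (φ' x : ℂ) / (φ x + ε * I)) U :=
    (integrableOn_indicator_iff measurableSet_Ioo).2
      ((hcont.integrableOn_compact isCompact_Icc).mono_set
        (inter_subset_left.trans Ioo_subset_Icc_self))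
  rw [intervalIntegral.integral_of_le hab, integral_Ioc_eq_integral_Ioo,
    ← inter_eq_right.2 (Ioo_subset_Icc_self.trans habU), ← setIntegral_indicator measurableSet_Ioo,
    ← integral_const_mul, ← integral_add (hG.ofReal.mul_div_add_mul_I hφm ε) (hind.const_mul _)]
  refine integral_congr_ae ?_
  filter_upwards [ae_restrict_mem hU, Measure.ae_ne _ s] with x hx hxs
  have hφx : (φ x : ℂ) ≠ 0 := ofReal_ne_zero.2 (hne x hx hxs)
  have hden := slitPlane_ne_zero (ofReal_add_mul_I_mem_slitPlane (φ x) (ne_of_gt hε))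
  by_cases hxab : x ∈ Ioo a b
  · simp [regularPart, hxab]
    field_simp
    ring
  · simp [regularPart, hxab]
    field_simp

theorem exists_tendsto_pv_and_tendsto_setIntegral_div_add_mul_I
    (hU : MeasurableSet U) (habU : Icc a b ⊆ U) (has : a < s) (hsb : s < b)
    (hφ : ∀ x ∈ Icc a b, HasDerivAt φ (φ' x) x) (hφ' : ContinuousOn φ' (Icc a b))
    (hφ'd : DifferentiableAt ℝ φ' s) (hφU : ContinuousOn φ U) (hmono : StrictMonoOn φ U)
    (hφs : φ s = 0) (hφ's : φ' s ≠ 0) (hh : ContinuousOn h (Icc a b))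
    (hhd : DifferentiableAt ℝ h s) (hout : IntegrableOn (fun x => h x / φ x) (U \ Ioo a b)) :
    ∃ K : ℝ,
      Tendsto (fun ε => ∫ x in U \ Ioo (s - ε) (s + ε), h x / φ x) (𝓝[>] 0) (𝓝 K) ∧
      Tendsto (fun ε : ℝ => ∫ x in U, (h x : ℂ) / (φ x + ε * I)) (𝓝[>] 0)
        (𝓝 (K - π * I * h s / φ' s)) := by
  have hsU : s ∈ U := habU ⟨has.le, hsb.le⟩
  have hne : ∀ x ∈ U, x ≠ s → φ x ≠ 0 := fun x hx hxs => hφs ▸ hmono.injOn.ne hx hsU hxs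
  have ha : φ a < 0 := hφs ▸ hmono (habU (left_mem_Icc.2 (has.trans hsb).le)) hsU has
  have hb : 0 < φ b := hφs ▸ hmono hsU (habU (right_mem_Icc.2 (has.trans hsb).le)) hsb
  have hG := integrableOn_regularPart hU habU has hsb hφ hφ' hφ'd hφs hφ's hne hh hhd hout
  refine ⟨_, tendsto_setIntegral_div_diff_Ioo habU has hsb hφ hφ' hφs hφ's hne hG, ?_⟩
  convert tendsto_setIntegral_div_add_mul_I hU habU (has.trans hsb).le hφ hφ' hφU hne ha hb hG
    using 2
  push_cast
  ring

end Plemelj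

theorem one_sub_inv_two_rpow_mul_le_rpow_sub_rpow {α x y : ℝ} (hα : 0 < α) (hx : 0 ≤ x)
    (hxy : 2 * x ≤ y) : (1 - 2⁻¹ ^ α) * y ^ α ≤ y ^ α - x ^ α := by
  have hle := Real.rpow_le_rpow hx (by linarith : x ≤ 2⁻¹ * y) hα.le
  rw [Real.mul_rpow (by norm_num) (by linarith)] at hle
  linarith

theorem integrableOn_Ioc_div_rpow_sub_rpow {h : ℝ → ℝ} {α c s : ℝ} (hα : 0 < α) (hs : 0 < s)
    (hh : ContinuousOn h (Ioc 0 (s / 2))) (hb : ∀ r ∈ Ioc 0 (s / 2), |h r| ≤ c) :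
    IntegrableOn (fun r => h r / (r ^ α - s ^ α)) (Ioc 0 (s / 2)) := by
  have hpos : 0 < (1 - 2⁻¹ ^ α) * s ^ α := mul_pos
    (sub_pos.2 (Real.rpow_lt_one (by norm_num) (by norm_num) hα)) (Real.rpow_pos_of_pos hs α)
  have hlow : ∀ r ∈ Ioc 0 (s / 2), (1 - 2⁻¹ ^ α) * s ^ α ≤ |r ^ α - s ^ α| := fun r hr => by
    rw [abs_sub_comm]
    exact (one_sub_inv_two_rpow_mul_le_rpow_sub_rpow hα hr.1.le (by linarith [hr.2])).trans
      (le_abs_self _)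
  have hne : ∀ r ∈ Ioc 0 (s / 2), r ^ α - s ^ α ≠ 0 := fun r hr =>
    abs_pos.1 (hpos.trans_le (hlow r hr))
  refine Integrable.mono' (integrableOn_const (C := c / ((1 - 2⁻¹ ^ α) * s ^ α))
    measure_Ioc_lt_top.ne) ((hh.div ((Real.continuous_rpow_const hα.le).sub
      continuous_const).continuousOn hne).aestronglyMeasurable measurableSet_Ioc) ?_
  refine (ae_restrict_iff' measurableSet_Ioc).2 (ae_of_all _ fun r hr => ?_)
  rw [Real.norm_eq_abs, abs_div]
  exact div_le_div₀ ((abs_nonneg _).trans (hb r hr)) (hb r hr) hpos (hlow r hr)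

theorem integrableOn_Ici_div_rpow_sub_rpow {h : ℝ → ℝ} {α c s : ℝ} (hα : 0 < α) (hs : 0 < s)
    (hh : ContinuousOn h (Ici (2 * s))) (hb : ∀ r ∈ Ici (2 * s), |h r| ≤ c * r⁻¹) :
    IntegrableOn (fun r => h r / (r ^ α - s ^ α)) (Ici (2 * s)) := by
  have hq : 0 < 1 - (2⁻¹ : ℝ) ^ α := sub_pos.2 (Real.rpow_lt_one (by norm_num) (by norm_num) hα)
  have hpos : ∀ r ∈ Ici (2 * s), 0 < (1 - 2⁻¹ ^ α) * r ^ α := fun r hr =>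
    mul_pos hq (Real.rpow_pos_of_pos (by linarith [mem_Ici.1 hr]) _)
  have hlow : ∀ r ∈ Ici (2 * s), (1 - 2⁻¹ ^ α) * r ^ α ≤ |r ^ α - s ^ α| := fun r hr =>
    (one_sub_inv_two_rpow_mul_le_rpow_sub_rpow hα hs.le hr).trans (le_abs_self _)
  have hne : ∀ r ∈ Ici (2 * s), r ^ α - s ^ α ≠ 0 := fun r hr =>
    abs_pos.1 ((hpos r hr).trans_le (hlow r hr))
  have hint : IntegrableOn (fun r : ℝ => r ^ (-1 - α)) (Ici (2 * s)) :=
    (integrableOn_Ici_iff_integrableOn_Ioi).2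
      (integrableOn_Ioi_rpow_of_lt (by linarith) (by linarith))
  refine Integrable.mono' (hint.const_mul (c / (1 - 2⁻¹ ^ α))) ((hh.div
    ((Real.continuous_rpow_const hα.le).sub continuous_const).continuousOn hne).aestronglyMeasurable
      measurableSet_Ici) ((ae_restrict_iff' measurableSet_Ici).2 (ae_of_all _ fun r hr => ?_))
  have hr0 : 0 < r := by linarith [mem_Ici.1 hr]
  rw [Real.norm_eq_abs, abs_div]
  calc |h r| / |r ^ α - s ^ α| ≤ c * r⁻¹ / ((1 - 2⁻¹ ^ α) * r ^ α) :=
        div_le_div₀ ((abs_nonneg _).trans (hb r hr)) (hb r hr) (hpos r hr) (hlow r hr)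
    _ = c / (1 - 2⁻¹ ^ α) * r ^ (-1 - α) := by
        rw [Real.rpow_sub hr0, Real.rpow_neg_one]
        field_simp

theorem integrableOn_div_rpow_sub_rpow {h : ℝ → ℝ} {α c s : ℝ} (hα : 0 < α) (hs : 0 < s)
    (hh : ContinuousOn h (Ioi 0)) (hb : ∀ r, 0 < r → |h r| ≤ c * min 1 r⁻¹) :
    IntegrableOn (fun r => h r / (r ^ α - s ^ α)) (Ioi 0 \ Ioo (s / 2) (2 * s)) := by
  have hc : 0 ≤ c := by simpa using (abs_nonneg _).trans (hb 1 one_pos)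
  have hIci : Ici (2 * s) ⊆ Ioi 0 := fun r hr => by simp only [mem_Ioi]; linarith [mem_Ici.1 hr]
  rw [Ioi_sdiff_Ioo_eq_Ioc_union_Ici (by positivity)]
  exact (integrableOn_Ioc_div_rpow_sub_rpow hα hs (hh.mono Ioc_subset_Ioi_self) fun r hr =>
    (hb r hr.1).trans (mul_le_of_le_one_right hc (min_le_left _ _))).union
    (integrableOn_Ici_div_rpow_sub_rpow hα hs (hh.mono hIci) fun r hr =>
      (hb r (hIci hr)).trans (mul_le_mul_of_nonneg_left (min_le_right _ _) hc))

theorem stmt8_general (α : ℝ) (hα1 : 1 < α) (c₁ : ℝ)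
    (h h' : ℝ → ℝ)
    (hderiv : ∀ r : ℝ, 0 < r → HasDerivAt h (h' r) r)
    (hb : ∀ r : ℝ, 0 < r → |h r| ≤ c₁ * min 1 r⁻¹)
    (s : ℝ) (hs : 0 < s) :
    ∃ K : ℝ,
      Tendsto (fun ε : ℝ =>
          (1 / Real.pi) *
            ∫ r in Set.Ioi (0 : ℝ) \ Set.Ioo (s - ε) (s + ε), h r / (r ^ α - s ^ α))
        (nhdsWithin 0 (Set.Ioi 0)) (nhds K) ∧
      Tendsto (fun ε : ℝ =>
          (1 / (Real.pi : ℂ)) *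
            ∫ r in Set.Ioi (0 : ℝ),
              (h r : ℂ) / (((r ^ α : ℝ) : ℂ) - ((s ^ α : ℝ) : ℂ) + (ε : ℂ) * Complex.I))
        (nhdsWithin 0 (Set.Ioi 0))
        (nhds ((K : ℂ) - Complex.I * (h s : ℂ) / ((α : ℂ) * ((s ^ (α - 1) : ℝ) : ℂ)))) := by
  have hα : 0 < α := by linarith
  have hIcc : Icc (s / 2) (2 * s) ⊆ Ioi 0 := fun r hr => by simp only [mem_Ioi]; linarith [hr.1]
  have hφ : ∀ r, 0 < r → HasDerivAt (fun r : ℝ => r ^ α - s ^ α) (α * r ^ (α - 1)) r :=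
    fun r hr => (Real.hasDerivAt_rpow_const (Or.inl hr.ne')).sub_const _
  have hmono : StrictMonoOn (fun r : ℝ => r ^ α - s ^ α) (Ioi 0) := fun x hx y hy hxy =>
    sub_lt_sub_right ((Real.strictMonoOn_rpow_Ici_of_exponent_pos hα).mono Ioi_subset_Ici_self
      hx hy hxy) _
  have hhc : ContinuousOn h (Ioi 0) := fun r hr => (hderiv r hr).continuousAt.continuousWithinAt
  obtain ⟨K, hpv, hlim⟩ := exists_tendsto_pv_and_tendsto_setIntegral_div_add_mul_I
    (φ' := fun r => α * r ^ (α - 1)) measurableSet_Ioi hIcc (by linarith) (by linarith)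
    (fun r hr => hφ r (hIcc hr))
    (continuousOn_const.mul (continuousOn_id.rpow_const fun r hr => Or.inl (hIcc hr).ne'))
    ((Real.hasDerivAt_rpow_const (Or.inl hs.ne')).differentiableAt.const_mul α)
    ((Real.continuous_rpow_const hα.le).sub continuous_const).continuousOn hmono (sub_self _)
    (by positivity) (hhc.mono hIcc) (hderiv s hs).differentiableAt
    (integrableOn_div_rpow_sub_rpow hα hs hhc hb)
  refine ⟨K / π, ?_, ?_⟩
  · convert hpv.const_mul π⁻¹ using 2 <;> ring
  · convert (hlim.const_mul (π⁻¹ : ℂ)) using 2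
    · push_cast; ring
    · push_cast
      field_simp

theorem stmt8 (α : ℝ) (hα1 : 1 < α) (hα2 : α < 2) (c₁ c₂ : ℝ)
    (h h' : ℝ → ℝ)
    (hderiv : ∀ r : ℝ, 0 < r → HasDerivAt h (h' r) r)
    (hcont : ContinuousOn h' (Set.Ioi 0))
    (hb : ∀ r : ℝ, 0 < r → |h r| ≤ c₁ * min 1 r⁻¹)
    (hb' : ∀ r : ℝ, 0 < r → |h' r| ≤ c₂ * min 1 (r ^ 2)⁻¹)
    (s : ℝ) (hs : 0 < s) :
    ∃ K : ℝ,
      Tendsto (fun ε : ℝ =>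
          (1 / Real.pi) *
            ∫ r in Set.Ioi (0 : ℝ) \ Set.Ioo (s - ε) (s + ε), h r / (r ^ α - s ^ α))
        (nhdsWithin 0 (Set.Ioi 0)) (nhds K) ∧
      Tendsto (fun ε : ℝ =>
          (1 / (Real.pi : ℂ)) *
            ∫ r in Set.Ioi (0 : ℝ),
              (h r : ℂ) / (((r ^ α : ℝ) : ℂ) - ((s ^ α : ℝ) : ℂ) + (ε : ℂ) * Complex.I))
        (nhdsWithin 0 (Set.Ioi 0))
        (nhds ((K : ℂ) - Complex.I * (h s : ℂ) / ((α : ℂ) * ((s ^ (α - 1) : ℝ) : ℂ)))) :=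
  stmt8_general α hα1 c₁ h h' hderiv hb s hs
end
end

section
/- Fix α ∈ (1,2) and θ ∈ ℝ with |θ| ≤ π/α − π/2, let f, g ∈ 𝓗, and define L₀, L₁, L₂, L₃ as in the context. Then for every s > 0, L₃(s) − L₁(s)L₂(s)/L₀(s) = (1/(α s^{α−1} cos θ)) · ( ∫_ℝ e^{−sx sin θ} sin(sx cos θ) f(x) dx ) · ( ∫_ℝ e^{sy sin θ} sin(sy cos θ) g(y) dy ). -/
open MeasureTheory Filter

noncomputable section

/-! With `e = exp (θ i)`, `u = ℒf (-i s e)` and `v = ℒg (i s e)`, the left-hand side is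
`(Re (e u v) - Re (e u) Re (e v) / Re e) / (α s^(α-1))`, and for any complex numbers
`Re (e u v) - Re (e u) Re (e v) / Re e = -|e|² Im u Im v / Re e`. Since `|e| = 1` and `Im u`, `-Im v`
are the two sine integrals, the identity follows. The analytic input is only that the Laplace
integrals converge absolutely: on `(0, ∞)` a function of `𝓗₊` is bounded near `0` and decays like
`x^(-δx)`, faster than any exponential. -/

open Real Set

lemma Complex.re_mul_mul_sub_re_mul_mul_re_mul_div_re (e u v : ℂ) (he : e.re ≠ 0) :
    (e * u * v).re - (e * u).re * (e * v).re / e.re = -(‖e‖ ^ 2 * u.im * v.im) / e.re := by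
  rw [Complex.sq_norm, Complex.normSq_apply]
  simp only [Complex.mul_re, Complex.mul_im]
  field_simp
  ring

lemma div_sub_div_mul_div_div_div {K : Type*} [Field K] (a b d k c : K) :
    a / c - b / c * (d / c) / (k / c) = (a - b * d / k) / c := by
  rcases eq_or_ne c 0 with rfl | hc
  · simp
  · rw [div_div_eq_mul_div]
    field_simp

lemma cos_pos_of_abs_le_pi_div_sub_pi_div_two {α θ : ℝ} (hα : 1 < α)
    (hθ : |θ| ≤ π / α - π / 2) : 0 < cos θ := by
  have : π / α < π := div_lt_self pi_pos hα
  exact cos_pos_of_mem_Ioo (abs_lt.1 (by linarith))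

namespace Hplus

variable {g : ℝ → ℝ}

lemma abs_le_of_pos (hg : Hplus g) : ∃ δ > 0, ∃ C > 0, ∃ R > 0, ∀ x : ℝ, 0 < x →
    (R ≤ x → |g x| ≤ C * x ^ (-(δ * x))) ∧ (x ≤ R → |g x| ≤ C) := by
  obtain ⟨-, G, -, hGg, hbound⟩ := hg
  obtain ⟨δ, hδ, C, hC, R, hR, hGbound⟩ := hbound (π / 4) (by positivity) (by linarith [pi_pos])
  refine ⟨δ, hδ, C, hC, R, hR, fun x hx => ?_⟩
  have harg : |(x : ℂ).arg| ≤ π / 2 - π / 4 := by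
    rw [Complex.arg_ofReal_of_nonneg hx.le, abs_zero]
    linarith [pi_pos]
  simpa [hGg x hx, abs_of_pos hx] using hGbound x (by simpa using hx) harg

lemma continuousOn_Ioi (hg : Hplus g) : ContinuousOn g (Ioi 0) := by
  obtain ⟨-, G, hG, hGg, -⟩ := hg
  have hGre : ContinuousOn (fun x : ℝ => (G x).re) (Ioi 0) :=
    Complex.continuous_re.comp_continuousOn <|
      hG.continuousOn.comp Complex.continuous_ofReal.continuousOn fun x hx => by simpa using hx
  exact hGre.congr fun x hx => by simp [hGg x hx]

lemma integrable_mul_exp (hg : Hplus g) (a : ℝ) :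
    Integrable (fun x => g x * exp (a * x)) := by
  obtain ⟨δ, hδ, C, hC, R, hR, hbound⟩ := hg.abs_le_of_pos
  have hcont : ContinuousOn (fun x => g x * exp (a * x)) (Ioi 0) :=
    hg.continuousOn_Ioi.mul (by fun_prop)
  have hIio : IntegrableOn (fun x => g x * exp (a * x)) (Iic 0) := by
    rw [integrableOn_Iic_iff_integrableOn_Iio]
    exact integrableOn_zero.congr_fun (fun x hx => by simp [hg.1 x hx]) measurableSet_Iio
  have hIoc : IntegrableOn (fun x => g x * exp (a * x)) (Ioc 0 R) := by
    refine IntegrableOn.of_bound measure_Ioc_lt_top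
      ((hcont.mono Ioc_subset_Ioi_self).aestronglyMeasurable measurableSet_Ioc) (C * exp (|a| * R)) ?_
    filter_upwards [ae_restrict_mem measurableSet_Ioc] with x ⟨hx0, hxR⟩
    rw [norm_mul, Real.norm_eq_abs, Real.norm_eq_abs, abs_exp]
    gcongr
    · exact (hbound x hx0).2 hxR
    · nlinarith [le_abs_self a, abs_nonneg a]
  have hIoi : IntegrableOn (fun x => g x * exp (a * x)) (Ioi R) := by
    refine integrable_of_isBigO_exp_neg one_pos (hcont.mono (Ici_subset_Ioi.2 hR)) ?_
    refine Asymptotics.IsBigO.of_bound C ?_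
    filter_upwards [eventually_ge_atTop (max R (exp ((a + 1) / δ)))] with x hx
    have hxR : R ≤ x := le_of_max_le_left hx
    have hx0 : 0 < x := hR.trans_le hxR
    have hlog : a + 1 ≤ δ * log x := by
      rw [← div_le_iff₀' hδ, ← log_exp ((a + 1) / δ)]
      exact log_le_log (exp_pos _) (le_of_max_le_right hx)
    have hgx := (hbound x hx0).1 hxR
    rw [rpow_def_of_pos hx0] at hgx
    rw [norm_mul, Real.norm_eq_abs, Real.norm_eq_abs, Real.norm_eq_abs, abs_exp, abs_exp]
    calc |g x| * exp (a * x) ≤ C * exp (log x * -(δ * x)) * exp (a * x) := by gcongr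
      _ = C * exp (a * x - δ * log x * x) := by rw [mul_assoc, ← exp_add]; ring_nf
      _ ≤ C * exp (-1 * x) := by gcongr; nlinarith
  have hIoi0 := hIoc.union hIoi
  rw [Ioc_union_Ioi_eq_Ioi hR.le] at hIoi0
  rw [← integrableOn_univ, ← Iic_union_Ioi (a := (0 : ℝ))]
  exact hIio.union hIoi0

end Hplus

namespace Hclass

variable {f : ℝ → ℝ}

lemma integrable_mul_exp (hf : Hclass f) (a : ℝ) :
    Integrable (fun x => f x * exp (a * x)) := by
  obtain ⟨fp, fm, hp, hm, hf⟩ := hf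
  have hm' : Integrable (fun x => fm x * exp (a * x)) := by
    simpa using (hm.integrable_mul_exp (-a)).comp_neg
  simp only [hf, add_mul]
  exact (hp.integrable_mul_exp a).add hm'

lemma integrable_mul_cexp (hf : Hclass f) (z : ℂ) :
    Integrable (fun x : ℝ => (f x : ℂ) * Complex.exp (-z * x)) := by
  have hmeas : AEStronglyMeasurable f := by simpa using (hf.integrable_mul_exp 0).1
  refine (hf.integrable_mul_exp (-z.re)).congr' (by fun_prop) (ae_of_all _ fun x => ?_)
  simp [Complex.norm_exp, abs_exp]

lemma im_Ltrans (hf : Hclass f) (z : ℂ) :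
    (Ltrans f z).im = -∫ x, exp (-(z.re * x)) * sin (z.im * x) * f x := by
  rw [Ltrans, ← integral_neg, ← Complex.imCLM_apply,
    ← ContinuousLinearMap.integral_comp_comm _ (hf.integrable_mul_cexp z)]
  refine integral_congr_ae (ae_of_all _ fun x => ?_)
  simp only [Complex.imCLM_apply, Complex.im_ofReal_mul, Complex.exp_im, neg_mul, Complex.neg_re,
    Complex.neg_im, Complex.re_mul_ofReal, Complex.im_mul_ofReal, sin_neg]
  ring

lemma im_Ltrans_neg_I_mul (hf : Hclass f) (s θ : ℝ) :
    (Ltrans f (-Complex.I * s * Complex.exp (θ * Complex.I))).im =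
      ∫ x, exp (-(s * x * sin θ)) * sin (s * x * cos θ) * f x := by
  have hre : (-Complex.I * s * Complex.exp (θ * Complex.I)).re = s * sin θ := by
    simp [Complex.exp_ofReal_mul_I_im]
  have him : (-Complex.I * s * Complex.exp (θ * Complex.I)).im = -(s * cos θ) := by
    simp [Complex.exp_ofReal_mul_I_re]
  rw [hf.im_Ltrans, hre, him, ← integral_neg]
  congr 1 with x
  rw [neg_mul, sin_neg]
  ring_nf

lemma im_Ltrans_I_mul (hf : Hclass f) (s θ : ℝ) :
    (Ltrans f (Complex.I * s * Complex.exp (θ * Complex.I))).im =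
      -∫ x, exp (s * x * sin θ) * sin (s * x * cos θ) * f x := by
  have hre : (Complex.I * s * Complex.exp (θ * Complex.I)).re = -(s * sin θ) := by
    simp [Complex.exp_ofReal_mul_I_im]
  have him : (Complex.I * s * Complex.exp (θ * Complex.I)).im = s * cos θ := by
    simp [Complex.exp_ofReal_mul_I_re]
  rw [hf.im_Ltrans, hre, him]
  congr 2 with x
  ring_nf

end Hclass

theorem stmt12_general (α θ : ℝ) (hα1 : 1 < α)
    (hθ : |θ| ≤ Real.pi / α - Real.pi / 2)
    (f g : ℝ → ℝ) (hf : Hclass f) (hg : Hclass g) (s : ℝ) :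
    (Complex.exp ((θ : ℂ) * Complex.I) *
          Ltrans f (-Complex.I * (s : ℂ) * Complex.exp ((θ : ℂ) * Complex.I)) *
          Ltrans g (Complex.I * (s : ℂ) * Complex.exp ((θ : ℂ) * Complex.I))).re /
        (α * s ^ (α - 1)) -
      ((Complex.exp ((θ : ℂ) * Complex.I) *
            Ltrans f (-Complex.I * (s : ℂ) * Complex.exp ((θ : ℂ) * Complex.I))).re /
          (α * s ^ (α - 1))) *
        ((Complex.exp ((θ : ℂ) * Complex.I) *
            Ltrans g (Complex.I * (s : ℂ) * Complex.exp ((θ : ℂ) * Complex.I))).re /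
          (α * s ^ (α - 1))) /
        (Real.cos θ / (α * s ^ (α - 1))) =
      1 / (α * s ^ (α - 1) * Real.cos θ) *
        (∫ x : ℝ, Real.exp (-(s * x * Real.sin θ)) * Real.sin (s * x * Real.cos θ) * f x) *
        (∫ y : ℝ, Real.exp (s * y * Real.sin θ) * Real.sin (s * y * Real.cos θ) * g y) := by
  have hcos := (cos_pos_of_abs_le_pi_div_sub_pi_div_two hα1 hθ).ne'
  have hre_identity := Complex.re_mul_mul_sub_re_mul_mul_re_mul_div_re (Complex.exp (θ * Complex.I))
    (Ltrans f (-Complex.I * s * Complex.exp (θ * Complex.I)))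
    (Ltrans g (Complex.I * s * Complex.exp (θ * Complex.I)))
    (by rwa [Complex.exp_ofReal_mul_I_re])
  rw [Complex.exp_ofReal_mul_I_re, Complex.norm_exp_ofReal_mul_I, hf.im_Ltrans_neg_I_mul,
    hg.im_Ltrans_I_mul] at hre_identity
  rw [div_sub_div_mul_div_div_div, hre_identity]
  ring

theorem stmt12 (α θ : ℝ) (hα1 : 1 < α) (hα2 : α < 2)
    (hθ : |θ| ≤ Real.pi / α - Real.pi / 2)
    (f g : ℝ → ℝ) (hf : Hclass f) (hg : Hclass g) (s : ℝ) (hs : 0 < s) :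
    (Complex.exp ((θ : ℂ) * Complex.I) *
          Ltrans f (-Complex.I * (s : ℂ) * Complex.exp ((θ : ℂ) * Complex.I)) *
          Ltrans g (Complex.I * (s : ℂ) * Complex.exp ((θ : ℂ) * Complex.I))).re /
        (α * s ^ (α - 1)) -
      ((Complex.exp ((θ : ℂ) * Complex.I) *
            Ltrans f (-Complex.I * (s : ℂ) * Complex.exp ((θ : ℂ) * Complex.I))).re /
          (α * s ^ (α - 1))) *
        ((Complex.exp ((θ : ℂ) * Complex.I) *
            Ltrans g (Complex.I * (s : ℂ) * Complex.exp ((θ : ℂ) * Complex.I))).re /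
          (α * s ^ (α - 1))) /
        (Real.cos θ / (α * s ^ (α - 1))) =
      1 / (α * s ^ (α - 1) * Real.cos θ) *
        (∫ x : ℝ, Real.exp (-(s * x * Real.sin θ)) * Real.sin (s * x * Real.cos θ) * f x) *
        (∫ y : ℝ, Real.exp (s * y * Real.sin θ) * Real.sin (s * y * Real.cos θ) * g y) :=
  stmt12_general α θ hα1 hθ f g hf hg s
end
end
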